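/- arXiv:1811.06444 — 7 statements merged into one kernel-verified Lean document; each statement's English description precedes it below -/
import Mathlib

section
/- Let n, r, t be natural numbers with t ≤ min(r, n-r), and suppose r = c_r·n and t = c_t·n with c_r, c_t bounded away from 0 and 1 by a fixed constant δ > 0. Then for every k with 0 ≤ k ≤ t, the hypergeometric probability C(r,k)·C(n-r,t-k)/C(n,t) is at most C(δ)/√n for some constant C(δ) depending only on δ. -/
lemma aux_rec (r s t k : ℕ) (hk : k < t) (htr : t ≤ r) (hts : t ≤ s) :
    r.choose (k+1) * s.choose (t-(k+1)) * ((k+1) * (s - t + (k+1))) =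
    r.choose k * s.choose (t-k) * ((r-k) * (t-k)) := by
  have h1 := Nat.choose_succ_right_eq r k
  have h2 := Nat.choose_succ_right_eq s (t-(k+1))
  have e1 : t - (k+1) + 1 = t - k := by omega
  have e2 : s - (t - (k+1)) = s - t + (k+1) := by omega
  rw [e1, e2] at h2
  calc r.choose (k+1) * s.choose (t-(k+1)) * ((k+1) * (s - t + (k+1)))
      = (r.choose (k+1) * (k+1)) * (s.choose (t-(k+1)) * (s - t + (k+1))) := by ring
    _ = (r.choose k * (r-k)) * (s.choose (t-k) * (t-k)) := by rw [h1, ← h2]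
    _ = r.choose k * s.choose (t-k) * ((r-k) * (t-k)) := by ring

lemma aux_sum (r s t : ℕ) :
    ∑ k ∈ Finset.range (t+1), r.choose k * s.choose (t-k) = (r+s).choose t := by
  rw [Nat.add_choose_eq, Finset.Nat.sum_antidiagonal_eq_sum_range_succ_mk]

set_option maxHeartbeats 4000000 in
theorem stmt_8 (δ : ℝ) (hδ : 0 < δ) :
    ∃ C : ℝ, 0 < C ∧ ∀ (n r t k : ℕ) (cr ct : ℝ), 1 ≤ n →
      (r : ℝ) = cr * n → (t : ℝ) = ct * n →
      δ ≤ cr → cr ≤ 1 - δ → δ ≤ ct → ct ≤ 1 - δ →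
      t ≤ min r (n - r) → k ≤ t →
      ((r.choose k : ℝ) * ((n - r).choose (t - k) : ℝ)) / (n.choose t : ℝ)
        ≤ C / Real.sqrt n := by
  refine ⟨60/δ^2, by positivity, ?_⟩
  intro n r t k cr ct hn hrc htc hcr1 hcr2 hct1 hct2 htmin hkt
  have hδ2 : δ ≤ 1/2 := by linarith
  have hn0 : (0:ℝ) < n := by exact_mod_cast hn
  set s := n - r with hs
  have htr : t ≤ r := le_trans htmin (min_le_left _ _)
  have hts : t ≤ s := le_trans htmin (min_le_right _ _)
  -- real bounds
  have hrl : δ*n ≤ (r:ℝ) := by rw [hrc]; exact mul_le_mul_of_nonneg_right hcr1 hn0.le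
  have hru : (r:ℝ) ≤ (1-δ)*n := by rw [hrc]; exact mul_le_mul_of_nonneg_right hcr2 hn0.le
  have htl : δ*n ≤ (t:ℝ) := by rw [htc]; exact mul_le_mul_of_nonneg_right hct1 hn0.le
  have htu : (t:ℝ) ≤ (1-δ)*n := by rw [htc]; exact mul_le_mul_of_nonneg_right hct2 hn0.le
  have hrn : r ≤ n := by
    have : (r:ℝ) ≤ (n:ℝ) := by nlinarith
    exact_mod_cast this
  have hsr : (s:ℝ) = (n:ℝ) - r := by rw [hs]; push_cast [hrn]; ring
  have hsl : δ*n ≤ (s:ℝ) := by rw [hsr]; nlinarith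
  have hsu : (s:ℝ) ≤ (n:ℝ) := by rw [hsr]; nlinarith
  have htn : t ≤ n := le_trans htr hrn
  have hrsn : r + s = n := by omega
  have hstn : (t:ℝ) ≤ (s:ℝ) := by exact_mod_cast hts
  have htrn : (t:ℝ) ≤ (r:ℝ) := by exact_mod_cast htr
  have htnn : (t:ℝ) ≤ (n:ℝ) := by exact_mod_cast htn
  -- the weights
  set a : ℕ → ℕ := fun j => r.choose j * s.choose (t - j) with ha
  set b : ℕ → ℝ := fun j => (a j : ℝ) with hb
  have hsum : ∑ j ∈ Finset.range (t+1), a j = n.choose t := by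
    rw [ha]; rw [aux_sum r s t, hrsn]
  have hapos : ∀ j, j ≤ t → 0 < a j := by
    intro j hj
    exact Nat.mul_pos (Nat.choose_pos (hj.trans htr))
      (Nat.choose_pos (le_trans (Nat.sub_le _ _) hts))
  have hbnn : ∀ j, 0 ≤ b j := fun j => Nat.cast_nonneg _
  have hrec : ∀ j : ℕ, j < t →
      b (j+1) * (((j:ℝ)+1) * ((s:ℝ) - (t:ℝ) + ((j:ℝ)+1))) =
      b j * (((r:ℝ)-(j:ℝ)) * ((t:ℝ)-(j:ℝ))) := by
    intro j hj
    have h := aux_rec r s t j hj htr hts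
    have hjr : j ≤ r := le_trans hj.le htr
    have := congrArg (fun x : ℕ => (x:ℝ)) h
    push_cast [Nat.cast_sub hts, Nat.cast_sub hjr, Nat.cast_sub hj.le] at this
    simp only [hb, ha]; push_cast
    linarith [this]
  -- argmax
  obtain ⟨K, hKmem, hKmax⟩ := Finset.exists_max_image (Finset.range (t+1)) a
    ⟨0, Finset.mem_range.2 (Nat.succ_pos t)⟩
  have hKt : K ≤ t := Nat.lt_succ_iff.1 (Finset.mem_range.1 hKmem)
  have hbKpos : 0 < b K := by simp only [hb]; exact_mod_cast hapos K hKt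
  have hbmax : ∀ j, j ≤ t → b j ≤ b K := by
    intro j hj
    simp only [hb]
    exact_mod_cast hKmax j (Finset.mem_range.2 (Nat.lt_succ_of_le hj))
  have hCnt_pos : (0:ℝ) < (n.choose t : ℝ) := by exact_mod_cast Nat.choose_pos htn
  have hbk_le_sum : b k ≤ (n.choose t : ℝ) := by
    rw [← hsum]; push_cast
    exact Finset.single_le_sum (f := fun j => ((a j : ℝ)))
      (fun j _ => Nat.cast_nonneg _) (Finset.mem_range.2 (Nat.lt_succ_of_le hkt))
  have hgoal_eq : ((r.choose k : ℝ) * ((n - r).choose (t - k) : ℝ)) = b k := by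
    rw [hb, ha]; push_cast; rfl
  rw [hgoal_eq]
  have hsqpos : 0 < Real.sqrt n := Real.sqrt_pos.2 hn0
  by_cases hbig : 24/δ^2 ≤ (n:ℝ)
  · -- main case : n ≥ 24/δ²
    have hd2 : (0:ℝ) < δ^2 := by positivity
    have hn24 : 24 ≤ δ^2 * (n:ℝ) := by
      rw [div_le_iff₀ hd2] at hbig; linarith
    have hn1 : (1:ℝ) ≤ (n:ℝ) := by exact_mod_cast hn
    have e0' : δ^2*(n:ℝ)/8 ≤ δ*(n:ℝ)/16 := by
      linarith [mul_nonneg (mul_nonneg (show (0:ℝ) ≤ 1/2-δ by linarith) hδ.le) hn0.le]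
    have hrnr : (r:ℝ) ≤ (n:ℝ) := by linarith [hru, mul_nonneg hδ.le hn0.le]
    have hA : (0:ℝ) ≤ (δ^2*(n:ℝ) - 24)*(n:ℝ) := mul_nonneg (by linarith) hn0.le
    have hB : (0:ℝ) ≤ (δ^2*(n:ℝ))*((n:ℝ)-1) := mul_nonneg (by positivity) (by linarith)
    -- lower bound on the argmax K
    have hKlow : δ^2*(n:ℝ)/8 < (K:ℝ) := by
      by_contra hcon
      push_neg at hcon
      rcases lt_or_eq_of_le hKt with hKlt | hKeq
      · have h1 : b (K+1) ≤ b K := hbmax (K+1) hKlt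
        have hKr2 : (K:ℝ) ≤ (t:ℝ) := by exact_mod_cast hKt
        have hKnn : (0:ℝ) ≤ (K:ℝ) := Nat.cast_nonneg K
        have h2 := hrec K hKlt
        have hDpos : (0:ℝ) ≤ ((K:ℝ)+1) * ((s:ℝ)-(t:ℝ)+((K:ℝ)+1)) := by
          apply mul_nonneg (by linarith); linarith [hstn]
        have key : ((r:ℝ)-(K:ℝ)) * ((t:ℝ)-(K:ℝ)) ≤ ((K:ℝ)+1) * ((s:ℝ)-(t:ℝ)+((K:ℝ)+1)) := by
          have h3 : b K * (((r:ℝ)-(K:ℝ)) * ((t:ℝ)-(K:ℝ)))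
              ≤ b K * (((K:ℝ)+1) * ((s:ℝ)-(t:ℝ)+((K:ℝ)+1))) := by
            calc b K * (((r:ℝ)-(K:ℝ)) * ((t:ℝ)-(K:ℝ)))
                = b (K+1) * (((K:ℝ)+1) * ((s:ℝ)-(t:ℝ)+((K:ℝ)+1))) := h2.symm
              _ ≤ b K * (((K:ℝ)+1) * ((s:ℝ)-(t:ℝ)+((K:ℝ)+1))) :=
                  mul_le_mul_of_nonneg_right h1 hDpos
          exact le_of_mul_le_mul_left h3 hbKpos
        have e1 : 15*(δ*(n:ℝ))/16 ≤ (r:ℝ)-(K:ℝ) := by linarith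
        have e2 : 15*(δ*(n:ℝ))/16 ≤ (t:ℝ)-(K:ℝ) := by linarith
        have e0pos : (0:ℝ) ≤ 15*(δ*(n:ℝ))/16 := by positivity
        have p1 : (15*(δ*(n:ℝ))/16) * (15*(δ*(n:ℝ))/16) ≤ ((r:ℝ)-(K:ℝ))*((t:ℝ)-(K:ℝ)) :=
          mul_le_mul e1 e2 e0pos (by linarith)
        have p2 : ((K:ℝ)+1)*((s:ℝ)-(t:ℝ)+((K:ℝ)+1)) ≤ (δ^2*(n:ℝ)/8+1)*((n:ℝ)+1) :=
          mul_le_mul (by linarith) (by linarith) (by linarith [hstn]) (by positivity)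
        linarith only [p1, p2, key, hn24, hn1, hA, hB]
      · subst hKeq
        linarith [htl, e0', mul_pos hδ hn0, hcon]
    have hK1 : 1 ≤ K := by
      rcases Nat.eq_zero_or_pos K with h | h
      · exfalso; rw [h] at hKlow; simp at hKlow
        nlinarith [mul_nonneg (sq_nonneg δ) hn0.le]
      · exact h
    obtain ⟨K', rfl⟩ : ∃ K', K = K' + 1 := ⟨K - 1, by omega⟩
    push_cast at hKlow
    have hK't : K' < t := by omega
    have hKtr : (K':ℝ)+1 ≤ (t:ℝ) := by exact_mod_cast hKt
    have hK'le : (K':ℝ) ≤ (t:ℝ) := by linarith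
    have hK'nn : (0:ℝ) ≤ (K':ℝ) := Nat.cast_nonneg K'
    -- the argmax dominates its left neighbour
    have key2 : ((K':ℝ)+1) * ((s:ℝ)-(t:ℝ)+((K':ℝ)+1))
        ≤ ((r:ℝ)-(K':ℝ)) * ((t:ℝ)-(K':ℝ)) := by
      have h1 : b K' ≤ b (K'+1) := hbmax K' (by omega)
      have h2 := hrec K' hK't
      have hNnn : (0:ℝ) ≤ ((r:ℝ)-(K':ℝ)) * ((t:ℝ)-(K':ℝ)) :=
        mul_nonneg (by linarith) (by linarith)
      have h3 : b (K'+1) * (((K':ℝ)+1) * ((s:ℝ)-(t:ℝ)+((K':ℝ)+1)))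
          ≤ b (K'+1) * (((r:ℝ)-(K':ℝ)) * ((t:ℝ)-(K':ℝ))) :=
        h2.trans_le (mul_le_mul_of_nonneg_right h1 hNnn)
      exact le_of_mul_le_mul_left h3 hbKpos
    -- upper bound on the argmax
    have hKup : (K':ℝ) + 1 ≤ (t:ℝ) + 1 - δ^2*(n:ℝ)/8 := by
      by_contra hcon
      push_neg at hcon
      have hb1 : (t:ℝ)-(K':ℝ) < δ^2*(n:ℝ)/8 := by linarith
      have hK'b : 15*(δ*(n:ℝ))/16 ≤ (K':ℝ)+1 := by linarith
      have q1 : ((r:ℝ)-(K':ℝ))*((t:ℝ)-(K':ℝ)) ≤ (n:ℝ)*(δ^2*(n:ℝ)/8) :=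
        mul_le_mul (by linarith) hb1.le (by linarith) hn0.le
      have q2 : (15*(δ*(n:ℝ))/16)*(15*(δ*(n:ℝ))/16)
          ≤ ((K':ℝ)+1)*((s:ℝ)-(t:ℝ)+((K':ℝ)+1)) :=
        mul_le_mul hK'b (by linarith [hstn]) (by positivity) (by linarith)
      linarith only [q1, q2, key2, hA, hn1]
    set D0 : ℝ := ((K':ℝ)+1) * ((s:ℝ)-(t:ℝ)+((K':ℝ)+1)) with hD0def
    -- the window size m
    set m := ⌊δ^2 * Real.sqrt n / 30⌋₊ with hmdef
    have hsq : Real.sqrt n * Real.sqrt n = (n:ℝ) := Real.mul_self_sqrt hn0.le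
    have hm_le : (m:ℝ) ≤ δ^2*Real.sqrt n/30 := Nat.floor_le (by positivity)
    have hm1 : δ^2*Real.sqrt n/30 ≤ (m:ℝ)+1 := (Nat.lt_floor_add_one _).le
    have hsn_le : Real.sqrt n ≤ (n:ℝ) := by
      linarith only [hsq, hn1, sq_nonneg (Real.sqrt (n:ℝ) - 1)]
    have hmr : (m:ℝ) ≤ δ^2*(n:ℝ)/30 := by
      linarith only [hm_le, mul_le_mul_of_nonneg_left hsn_le (show (0:ℝ) ≤ δ^2 by positivity)]
    have hmn : (m:ℝ) ≤ (n:ℝ) := by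
      linarith only [hmr, mul_nonneg (show (0:ℝ) ≤ 1-δ^2 by nlinarith only [hδ2, hδ.le]) hn0.le]
    have hmnn : (0:ℝ) ≤ (m:ℝ) := Nat.cast_nonneg m
    have hKmt : K' + 1 + m ≤ t := by
      have hlt : ((K'+1+m : ℕ):ℝ) < (t:ℝ)+1 := by
        push_cast; linarith [hKup, hmr, hn24]
      have : K'+1+m < t+1 := by exact_mod_cast hlt
      omega
    have hD0 : δ^4*(n:ℝ)^2/64 ≤ D0 := by
      rw [hD0def]
      have hKsl : δ^2*(n:ℝ)/8 ≤ (s:ℝ)-(t:ℝ)+((K':ℝ)+1) := by linarith [hstn]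
      linarith only [mul_le_mul hKlow.le hKsl (by positivity) (by linarith)]
    have hD0pos : (0:ℝ) < D0 := lt_of_lt_of_le (by positivity) hD0
    set ε : ℝ := 7*(n:ℝ)*(m:ℝ)/D0 with hεdef
    have hεnn : (0:ℝ) ≤ ε := by rw [hεdef]; positivity
    have hεD0 : ε * D0 = 7*(n:ℝ)*(m:ℝ) := by
      rw [hεdef]; exact div_mul_cancel₀ _ hD0pos.ne'
    have hm2 : (m:ℝ)^2 ≤ δ^4*(n:ℝ)/900 := by
      have hS2 : δ^4 * (Real.sqrt (n:ℝ) * Real.sqrt (n:ℝ)) = δ^4 * (n:ℝ) := by rw [hsq]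
      linarith only [mul_le_mul hm_le hm_le hmnn (by positivity : (0:ℝ) ≤ δ^2*Real.sqrt (n:ℝ)/30), hS2]
    have hmε : (m:ℝ)*ε ≤ 1/2 := by
      rw [hεdef]
      have e : (m:ℝ) * (7*(n:ℝ)*(m:ℝ)/D0) = 7*(n:ℝ)*(m:ℝ)^2/D0 := by ring
      rw [e, div_le_iff₀ hD0pos]
      linarith only [mul_le_mul_of_nonneg_left hm2 (show (0:ℝ) ≤ 7*(n:ℝ) by positivity), hD0, hD0pos.le]
    -- main induction : terms in the window are ≥ half the max
    have ind : ∀ i, i ≤ m → b (K'+1) * (1 - (i:ℝ)*ε) ≤ b (K'+1+i) := by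
      intro i
      induction i with
      | zero => intro _; simp
      | succ i ih =>
        intro hi1
        have hi : i ≤ m := Nat.le_of_succ_le hi1
        have IH := ih hi
        have him1 : (i:ℝ)+1 ≤ (m:ℝ) := by exact_mod_cast hi1
        have hinn : (0:ℝ) ≤ (i:ℝ) := Nat.cast_nonneg i
        have hm1' : (1:ℝ) ≤ (m:ℝ) := by
          have : 1 ≤ m := by omega
          exact_mod_cast this
        have hjt : K'+1+i < t := by omega
        have h2 := hrec (K'+1+i) hjt
        push_cast at h2
        set Nj : ℝ := ((r:ℝ)-((K':ℝ)+(i:ℝ)+1)) * ((t:ℝ)-((K':ℝ)+(i:ℝ)+1)) with hNjdef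
        set Dj : ℝ := ((K':ℝ)+(i:ℝ)+2) * ((s:ℝ)-(t:ℝ)+((K':ℝ)+(i:ℝ)+2)) with hDjdef
        have h2' : b (K'+1+i+1) * Dj = b (K'+1+i) * Nj := by
          rw [hDjdef, hNjdef]; linear_combination h2
        have hjtr : ((K':ℝ)+(i:ℝ)+1) ≤ (t:ℝ) := by
          have : ((K'+1+i : ℕ):ℝ) ≤ (t:ℝ) := by exact_mod_cast hjt.le
          push_cast at this; linarith
        have hNlow : D0 - 4*(n:ℝ)*(m:ℝ) ≤ Nj := by
          rw [hNjdef]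
          have hABle : ((i:ℝ)+1) * (((r:ℝ)-(K':ℝ)) + ((t:ℝ)-(K':ℝ))) ≤ (m:ℝ)*(2*(n:ℝ)) :=
            mul_le_mul him1 (by linarith) (by linarith) (by positivity)
          linarith only [key2, hABle, sq_nonneg ((i:ℝ)+1),
            mul_nonneg hn0.le hmnn, hD0def]
        have hDup : Dj ≤ D0 + 3*(n:ℝ)*(m:ℝ) := by
          rw [hDjdef, hD0def]
          have h3n : ((i:ℝ)+1) * (((K':ℝ)+1) + ((s:ℝ)-(t:ℝ)+((K':ℝ)+1)) + ((i:ℝ)+1))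
              ≤ (m:ℝ)*(3*(n:ℝ)) :=
            mul_le_mul him1 (by linarith [hstn, hsu, hKtr, hmn]) (by linarith [hstn]) (by positivity)
          linarith only [h3n]
        have hDjpos : (0:ℝ) < Dj := by
          rw [hDjdef]
          have p1 : (0:ℝ) < (K':ℝ)+(i:ℝ)+2 := by positivity
          have p2 : (0:ℝ) < (s:ℝ)-(t:ℝ)+((K':ℝ)+(i:ℝ)+2) := by
            linarith only [hstn, hK'nn, hinn]
          exact mul_pos p1 p2
        have hε1 : ε ≤ 1/2 := by
          linarith only [hmε, mul_nonneg (show (0:ℝ) ≤ (m:ℝ)-1 by linarith) hεnn]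
        have hiε : (i:ℝ)*ε ≤ 1/2 := by
          linarith only [hmε, mul_le_mul_of_nonneg_right (show (i:ℝ) ≤ (m:ℝ) by linarith) hεnn]
        have hfac : Dj * (1-ε) ≤ Nj := by
          have t1 : Dj*(1-ε) ≤ (D0 + 3*(n:ℝ)*(m:ℝ))*(1-ε) :=
            mul_le_mul_of_nonneg_right hDup (by linarith)
          linarith only [t1, hεD0, hNlow,
            mul_nonneg (mul_nonneg hn0.le hmnn) hεnn]
        have hPnn : (0:ℝ) ≤ b (K'+1) := hbnn _
        have hmul : (b (K'+1) * (1 - (i:ℝ)*ε)) * (Dj*(1-ε)) ≤ b (K'+1+i) * Nj :=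
          mul_le_mul IH hfac (mul_nonneg hDjpos.le (by linarith)) (hbnn _)
        have e3 : b (K'+1) * (1 - ((i:ℝ)+1)*ε) * Dj
            ≤ (b (K'+1) * (1-(i:ℝ)*ε)) * (Dj*(1-ε)) := by
          linarith only [mul_nonneg (mul_nonneg hPnn hinn)
            (mul_nonneg (sq_nonneg ε) hDjpos.le)]
        have hfin : b (K'+1) * (1 - ((i:ℝ)+1)*ε) * Dj ≤ b (K'+1+i+1) * Dj := by
          calc b (K'+1) * (1 - ((i:ℝ)+1)*ε) * Dj
              ≤ (b (K'+1) * (1-(i:ℝ)*ε)) * (Dj*(1-ε)) := e3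
            _ ≤ b (K'+1+i) * Nj := hmul
            _ = b (K'+1+i+1) * Dj := h2'.symm
        have hres := le_of_mul_le_mul_right hfin hDjpos
        push_cast
        exact hres
    -- sum the window
    have hcomp : ∀ j ∈ Finset.Icc (K'+1) (K'+1+m), b (K'+1)/2 ≤ b j := by
      intro j hj
      rw [Finset.mem_Icc] at hj
      obtain ⟨i, rfl⟩ : ∃ i, j = K'+1+i := ⟨j - (K'+1), by omega⟩
      have hi : i ≤ m := by omega
      have h1 := ind i hi
      have hiε : (i:ℝ)*ε ≤ 1/2 := by
        have hile : (i:ℝ) ≤ (m:ℝ) := by exact_mod_cast hi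
        linarith only [hmε, mul_le_mul_of_nonneg_right hile hεnn]
      linarith only [h1, mul_nonneg hbKpos.le (show (0:ℝ) ≤ 1/2 - (i:ℝ)*ε by linarith)]
    have hsumIcc : ((m:ℝ)+1) * (b (K'+1)/2) ≤ (n.choose t : ℝ) := by
      have hsub : Finset.Icc (K'+1) (K'+1+m) ⊆ Finset.range (t+1) := by
        intro x hx
        rw [Finset.mem_Icc] at hx
        rw [Finset.mem_range]
        omega
      calc ((m:ℝ)+1) * (b (K'+1)/2)
          = ∑ _j ∈ Finset.Icc (K'+1) (K'+1+m), b (K'+1)/2 := by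
            rw [Finset.sum_const, Nat.card_Icc,
              show K'+1+m+1-(K'+1) = m+1 from by omega, nsmul_eq_mul]
            push_cast; ring
        _ ≤ ∑ j ∈ Finset.Icc (K'+1) (K'+1+m), b j := Finset.sum_le_sum hcomp
        _ ≤ ∑ j ∈ Finset.range (t+1), b j :=
            Finset.sum_le_sum_of_subset_of_nonneg hsub (fun j _ _ => hbnn j)
        _ = (n.choose t : ℝ) := by
            simp only [hb]; rw [← Nat.cast_sum, hsum]
    -- finish
    have hbkK : b k ≤ b (K'+1) := hbmax k hkt
    have hm1pos : (0:ℝ) < (m:ℝ)+1 := by positivity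
    have hd2s : (0:ℝ) < δ^2*Real.sqrt n := by positivity
    calc b k / (n.choose t : ℝ) ≤ 2/((m:ℝ)+1) := by
          rw [div_le_div_iff₀ hCnt_pos hm1pos]
          linarith only [hsumIcc, mul_le_mul_of_nonneg_right hbkK hm1pos.le]
      _ ≤ 60/δ^2 / Real.sqrt n := by
          rw [div_div, div_le_div_iff₀ hm1pos hd2s]
          linarith [hm1]
  · -- small n : trivial bound
    push_neg at hbig
    have hd2 : (0:ℝ) < δ^2 := by positivity
    have h24 : δ^2 * n < 24 := by
      rw [lt_div_iff₀ hd2] at hbig; linarith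
    have hsqle : Real.sqrt n ≤ 60/δ^2 := by
      rw [show (60:ℝ)/δ^2 = Real.sqrt ((60/δ^2)^2) from (Real.sqrt_sq (by positivity)).symm]
      apply Real.sqrt_le_sqrt
      rw [div_pow]
      rw [le_div_iff₀ (by positivity)]
      have hd14 : δ^2 ≤ 1/4 := by nlinarith only [hδ2, hδ.le]
      have hpr : (δ^2*(n:ℝ))*δ^2 ≤ 24*(1/4) :=
        mul_le_mul h24.le hd14 (sq_nonneg δ) (by norm_num)
      linarith only [hpr]
    calc b k / (n.choose t : ℝ) ≤ 1 := by
          rw [div_le_one hCnt_pos]; exact hbk_le_sum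
      _ ≤ 60/δ^2 / Real.sqrt n := by
          rw [le_div_iff₀ hsqpos]; linarith
end

section
/- Let X₁,...,X_b be indicator random variables that are negatively correlated, meaning ℙ(X_i = 1 for all i in S) ≤ ∏_{i∈S} ℙ(X_i = 1) for every subset S of indices, and let X = X₁+...+X_b. Then for every t ≥ 0, ℙ(X - 𝔼[X] > t) ≤ exp(-2t²/b). -/
/-!
Chernoff's method. Since each `X i` is `{0,1}`-valued, `exp (c * X i) = 1 + (exp c - 1) * X i`,
so expanding the product `exp (c * ∑ i, X i)` over subsets `T` gives
`𝔼 exp (c * ∑ i, X i) = ∑ T, (exp c - 1) ^ #T * ℙ(X i = 1 for all i ∈ T)`. For `c ≥ 0` all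
coefficients are nonnegative, so negative correlation bounds this by the same expansion for
independent copies, `∏ i, 𝔼 exp (c * X i)`. Hoeffding's lemma for each factor then gives the
sub-Gaussian bound `exp (c * 𝔼[∑ i, X i] + b * c ^ 2 / 8)`, and optimizing the Chernoff bound over `c`
yields `exp (-2 * t ^ 2 / b)`.
-/

open MeasureTheory ProbabilityTheory Real Finset

lemma exp_mul_eq_one_add_of_zero_or_one {x : ℝ} (hx : x = 0 ∨ x = 1) (c : ℝ) :
    exp (c * x) = 1 + (exp c - 1) * x := by
  rcases hx with rfl | rfl <;> simp

lemma mem_Icc_of_zero_or_one {x : ℝ} (hx : x = 0 ∨ x = 1) : x ∈ Set.Icc 0 1 := by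
  rcases hx with rfl | rfl <;> simp

lemma sum_mem_Icc_of_zero_or_one {ι : Type*} [Fintype ι] {x : ι → ℝ}
    (hx : ∀ i, x i = 0 ∨ x i = 1) : ∑ i, x i ∈ Set.Icc 0 (Fintype.card ι : ℝ) :=
  ⟨sum_nonneg fun i _ ↦ (mem_Icc_of_zero_or_one (hx i)).1,
    by simpa using sum_le_card_nsmul univ _ 1 fun i _ ↦ (mem_Icc_of_zero_or_one (hx i)).2⟩

lemma exp_mul_sum_eq_sum_powerset {ι : Type*} [Fintype ι] {x : ι → ℝ}
    (hx : ∀ i, x i = 0 ∨ x i = 1) (c : ℝ) :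
    exp (c * ∑ i, x i) = ∑ T ∈ univ.powerset, (exp c - 1) ^ #T * ∏ i ∈ T, x i := by
  simp_rw [mul_sum, exp_sum, exp_mul_eq_one_add_of_zero_or_one (hx _), prod_one_add,
    prod_mul_distrib, prod_const]

lemma prod_eq_indicator_of_zero_or_one {ι Ω : Type*} {X : ι → Ω → ℝ}
    (h01 : ∀ i ω, X i ω = 0 ∨ X i ω = 1) (T : Finset ι) (ω : Ω) :
    ∏ i ∈ T, X i ω = {ω | ∀ i ∈ T, X i ω = 1}.indicator 1 ω := by
  by_cases h : ∀ i ∈ T, X i ω = 1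
  · rw [Set.indicator_of_mem (show ω ∈ {ω | ∀ i ∈ T, X i ω = 1} from h), prod_eq_one h,
      Pi.one_apply]
  · rw [Set.indicator_of_notMem (show ω ∉ {ω | ∀ i ∈ T, X i ω = 1} from h)]
    obtain ⟨i, hiT, hi⟩ := not_forall₂.1 h
    exact prod_eq_zero hiT ((h01 i ω).resolve_right hi)

section

variable {Ω : Type*} [MeasurableSpace Ω] {μ : Measure Ω}

lemma measureReal_ge_le_exp_of_mgf_le [IsFiniteMeasure μ] {Y : Ω → ℝ} {v ε : ℝ} (hv : 0 < v)
    (hε : 0 ≤ ε) (hint : ∀ t, 0 ≤ t → Integrable (fun ω ↦ exp (t * Y ω)) μ)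
    (hmgf : ∀ t, 0 ≤ t → mgf Y μ t ≤ exp (v * t ^ 2 / 2)) :
    μ.real {ω | ε ≤ Y ω} ≤ exp (-ε ^ 2 / (2 * v)) := by
  have ht : 0 ≤ ε / v := by positivity
  calc μ.real {ω | ε ≤ Y ω} ≤ exp (-(ε / v) * ε) * mgf Y μ (ε / v) :=
        measure_ge_le_exp_mul_mgf ε ht (hint _ ht)
    _ ≤ exp (-(ε / v) * ε) * exp (v * (ε / v) ^ 2 / 2) := by gcongr; exact hmgf _ ht
    _ = exp (-ε ^ 2 / (2 * v)) := by rw [← exp_add]; congr 1; field_simp; ring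

lemma mgf_le_exp_of_mem_Icc [IsProbabilityMeasure μ] {X : Ω → ℝ} {a b : ℝ}
    (hm : AEMeasurable X μ) (hb : ∀ᵐ ω ∂μ, X ω ∈ Set.Icc a b) (t : ℝ) :
    mgf X μ t ≤ exp (t * μ[X] + (b - a) ^ 2 * t ^ 2 / 8) := by
  have hoeffding := (hasSubgaussianMGF_of_mem_Icc hm hb).mgf_le t
  have hshift : mgf X μ t = mgf (fun ω ↦ X ω - μ[X]) μ t * exp (t * μ[X]) := by
    rw [← mgf_add_const]; simp
  rw [hshift, add_comm, exp_add]
  gcongr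
  refine hoeffding.trans_eq ?_
  congr 1
  push_cast
  rw [Real.norm_eq_abs, div_pow, sq_abs]
  ring

section Indicators

variable {ι : Type*} {X : ι → Ω → ℝ}

lemma measurableSet_forall_eq_one (hmeas : ∀ i, Measurable (X i)) (T : Finset ι) :
    MeasurableSet {ω | ∀ i ∈ T, X i ω = 1} := by
  simp_rw [Set.ofPred_forall]
  exact .biInter T.countable_toSet fun i _ ↦ hmeas i (measurableSet_singleton 1)

lemma integrable_prod_of_zero_or_one [IsFiniteMeasure μ] (hmeas : ∀ i, Measurable (X i))
    (h01 : ∀ i ω, X i ω = 0 ∨ X i ω = 1) (T : Finset ι) :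
    Integrable (fun ω ↦ ∏ i ∈ T, X i ω) μ := by
  simp_rw [prod_eq_indicator_of_zero_or_one h01 T]
  exact (integrable_const 1).indicator (measurableSet_forall_eq_one hmeas T)

lemma integral_prod_eq_measureReal [IsFiniteMeasure μ] (hmeas : ∀ i, Measurable (X i))
    (h01 : ∀ i ω, X i ω = 0 ∨ X i ω = 1) (T : Finset ι) :
    ∫ ω, ∏ i ∈ T, X i ω ∂μ = μ.real {ω | ∀ i ∈ T, X i ω = 1} := by
  simp_rw [prod_eq_indicator_of_zero_or_one h01 T]
  exact integral_indicator_one (measurableSet_forall_eq_one hmeas T)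

lemma mgf_eq_one_add_of_zero_or_one [IsProbabilityMeasure μ] (hmeas : ∀ i, Measurable (X i))
    (h01 : ∀ i ω, X i ω = 0 ∨ X i ω = 1) (i : ι) (c : ℝ) :
    mgf (X i) μ c = 1 + (exp c - 1) * μ.real {ω | X i ω = 1} := by
  have hint := integrable_prod_of_zero_or_one (μ := μ) hmeas h01 {i}
  have hintegral := integral_prod_eq_measureReal (μ := μ) hmeas h01 {i}
  simp only [prod_singleton, mem_singleton, forall_eq] at hint hintegral
  simp_rw [mgf, exp_mul_eq_one_add_of_zero_or_one (h01 i _) c]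
  rw [integral_add (integrable_const 1) (hint.const_mul _), integral_const_mul, hintegral]
  simp

lemma mgf_sum_le_prod_mgf [Fintype ι] [IsProbabilityMeasure μ] (hmeas : ∀ i, Measurable (X i))
    (h01 : ∀ i ω, X i ω = 0 ∨ X i ω = 1)
    (hneg : ∀ T : Finset ι, μ {ω | ∀ i ∈ T, X i ω = 1} ≤ ∏ i ∈ T, μ {ω | X i ω = 1})
    {c : ℝ} (hc : 0 ≤ c) :
    mgf (fun ω ↦ ∑ i, X i ω) μ c ≤ ∏ i, mgf (X i) μ c := by
  have hd : 0 ≤ exp c - 1 := sub_nonneg.2 (one_le_exp hc)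
  have hnegReal (T : Finset ι) :
      μ.real {ω | ∀ i ∈ T, X i ω = 1} ≤ ∏ i ∈ T, μ.real {ω | X i ω = 1} := by
    simp_rw [measureReal_def, ← ENNReal.toReal_prod]
    exact ENNReal.toReal_mono (ENNReal.prod_ne_top fun i _ ↦ measure_ne_top μ _) (hneg T)
  calc mgf (fun ω ↦ ∑ i, X i ω) μ c
      = ∑ T ∈ univ.powerset, (exp c - 1) ^ #T * μ.real {ω | ∀ i ∈ T, X i ω = 1} := by
        simp_rw [mgf, exp_mul_sum_eq_sum_powerset (h01 · _) c]
        rw [integral_finsetSum _ fun T _ ↦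
          (integrable_prod_of_zero_or_one hmeas h01 T).const_mul _]
        simp_rw [integral_const_mul, integral_prod_eq_measureReal hmeas h01]
    _ ≤ ∑ T ∈ univ.powerset, (exp c - 1) ^ #T * ∏ i ∈ T, μ.real {ω | X i ω = 1} := by
        gcongr with T; exact hnegReal T
    _ = ∏ i, mgf (X i) μ c := by
        simp_rw [mgf_eq_one_add_of_zero_or_one hmeas h01 _ c, prod_one_add, prod_mul_distrib,
          prod_const]

lemma mgf_sum_sub_integral_le [Fintype ι] [IsProbabilityMeasure μ]
    (hmeas : ∀ i, Measurable (X i)) (h01 : ∀ i ω, X i ω = 0 ∨ X i ω = 1)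
    (hneg : ∀ T : Finset ι, μ {ω | ∀ i ∈ T, X i ω = 1} ≤ ∏ i ∈ T, μ {ω | X i ω = 1})
    {c : ℝ} (hc : 0 ≤ c) :
    mgf (fun ω ↦ ∑ i, X i ω - ∑ i, μ[X i]) μ c ≤ exp ((Fintype.card ι / 4) * c ^ 2 / 2) := by
  calc mgf (fun ω ↦ ∑ i, X i ω - ∑ i, μ[X i]) μ c
      = mgf (fun ω ↦ ∑ i, X i ω) μ c * exp (c * -∑ i, μ[X i]) := by
        rw [← mgf_add_const]; rfl
    _ ≤ (∏ i, exp (c * μ[X i] + c ^ 2 / 8)) * exp (c * -∑ i, μ[X i]) := by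
        gcongr
        refine (mgf_sum_le_prod_mgf hmeas h01 hneg hc).trans (prod_le_prod ?_ fun i _ ↦ ?_)
        · exact fun i _ ↦ mgf_nonneg
        · simpa using mgf_le_exp_of_mem_Icc (hmeas i).aemeasurable
            (ae_of_all _ fun ω ↦ mem_Icc_of_zero_or_one (h01 i ω)) c
    _ = exp ((Fintype.card ι / 4) * c ^ 2 / 2) := by
        rw [← exp_sum, ← exp_add, sum_add_distrib, ← mul_sum, sum_const, card_univ]
        congr 1
        simp only [nsmul_eq_mul]
        ring

end Indicators

end

theorem stmt_9 {Ω : Type*} [MeasurableSpace Ω] (μ : Measure Ω) [IsProbabilityMeasure μ]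
    (b : ℕ) (hb : 0 < b) (X : Fin b → Ω → ℝ)
    (hmeas : ∀ i, Measurable (X i))
    (h01 : ∀ i ω, X i ω = 0 ∨ X i ω = 1)
    (hneg : ∀ S : Finset (Fin b),
      μ {ω | ∀ i ∈ S, X i ω = 1} ≤ ∏ i ∈ S, μ {ω | X i ω = 1}) :
    ∀ t : ℝ, 0 ≤ t →
      μ {ω | (∑ i, X i ω) - (∑ i, ∫ x, X i x ∂μ) > t}
        ≤ ENNReal.ofReal (Real.exp (-2 * t ^ 2 / b)) := by
  intro t ht
  set Y : Ω → ℝ := fun ω ↦ ∑ i, X i ω - ∑ i, μ[X i]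
  have hYmeas : Measurable Y := (Finset.measurable_sum _ fun i _ ↦ hmeas i).sub_const _
  have hYbdd (ω : Ω) : Y ω ∈ Set.Icc (-∑ i, μ[X i]) ((b : ℝ) - ∑ i, μ[X i]) := by
    have hS := sum_mem_Icc_of_zero_or_one (h01 · ω)
    rw [Fintype.card_fin] at hS
    exact ⟨by linarith [hS.1], by linarith [hS.2]⟩
  have hchernoff := measureReal_ge_le_exp_of_mgf_le (μ := μ) (Y := Y)
    (by positivity : (0 : ℝ) < b / 4) ht
    (fun t _ ↦ integrable_exp_mul_of_mem_Icc hYmeas.aemeasurable (ae_of_all _ hYbdd))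
    (fun c hc ↦ by simpa using mgf_sum_sub_integral_le hmeas h01 hneg hc)
  calc μ {ω | (∑ i, X i ω) - (∑ i, ∫ x, X i x ∂μ) > t}
      ≤ μ {ω | t ≤ Y ω} := measure_mono fun ω (hω : t < Y ω) ↦ hω.le
    _ = ENNReal.ofReal (μ.real {ω | t ≤ Y ω}) := (ofReal_measureReal (measure_ne_top μ _)).symm
    _ ≤ ENNReal.ofReal (Real.exp (-2 * t ^ 2 / b)) := by
        refine ENNReal.ofReal_le_ofReal (hchernoff.trans_eq ?_)
        congr 1; field_simp; ring
end

section
/- Consider drawing b balls uniformly without replacement from an urn with a ≥ b balls of which some are red; let X be the number of red balls drawn. Then for all t ≥ 0, ℙ(|X - 𝔼[X]| > t) ≤ 2·exp(-2t²/b). -/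
/-!
Put `y i = x` on the red balls and `y i = 1` on the others, `x ≥ 0`. Summed over the `b`-subsets
`A`, `x ^ #(A ∩ Red)` is the elementary symmetric polynomial `e_b(y)`, and Maclaurin's inequality
`e_b(y) ≤ (a choose b) * (mean y) ^ b` dominates the moment generating function of the
hypergeometric count by that of drawing with replacement. Hoeffding's lemma for a Bernoulli
variable and Chernoff's argument then give the upper tail `exp (-2 t² / b)`; the lower tail is the
upper tail for the complementary colour.
-/

open Finset Real

lemma pow_mul_le_add_div_pow_succ {u w : ℝ} (hu : 0 ≤ u) (hw : 0 ≤ w) (m : ℕ) :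
    u ^ m * w ≤ ((m * u + w) / (m + 1)) ^ (m + 1) := by
  rcases hu.eq_or_lt with rfl | hu
  · cases m
    · simp
    · simp only [ne_eq, add_eq_zero, one_ne_zero, and_false, not_false_eq_true, zero_pow,
        zero_mul, mul_zero, zero_add]
      positivity
  set a := (w - u) / ((m + 1) * u)
  have hmean : (m * u + w) / (m + 1) = u * (1 + a) := by
    simp only [a]; field_simp; ring
  have ha : -2 ≤ a := by
    rw [le_div_iff₀ (by positivity)]; nlinarith
  calc u ^ m * w = u ^ (m + 1) * (1 + (m + 1 : ℕ) * a) := by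
        simp only [a]; push_cast; field_simp; ring
    _ ≤ u ^ (m + 1) * (1 + a) ^ (m + 1) := by gcongr; exact one_add_mul_le_pow ha (m + 1)
    _ = _ := by rw [hmean, mul_pow]

lemma choose_mul_pow_add_le (N m : ℕ) {u x : ℝ} (hu : 0 ≤ u) (hx : 0 ≤ x) :
    N.choose (m + 1) * u ^ (m + 1) + x * (N.choose m * u ^ m)
      ≤ (N + 1).choose (m + 1) * ((x + N * u) / (N + 1)) ^ (m + 1) := by
  rcases lt_or_ge N m with hNm | hmN
  · rw [Nat.choose_eq_zero_of_lt hNm, Nat.choose_eq_zero_of_lt (by omega)]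
    simp only [Nat.cast_zero, zero_mul, mul_zero, add_zero]
    positivity
  have h1 : ((N : ℝ) + 1) * N.choose m = (N + 1).choose (m + 1) * (m + 1) := by
    exact_mod_cast Nat.add_one_mul_choose_eq N m
  have h2 : (N.choose (m + 1) : ℝ) * (N + 1) = (N + 1).choose (m + 1) * (N - m) := by
    have := Nat.choose_mul_succ_eq N (m + 1)
    rw [show N + 1 - (m + 1) = N - m by omega] at this
    rw [← Nat.cast_sub hmN]
    exact_mod_cast this
  set w := ((N - m) * u + (m + 1) * x) / (N + 1)
  have hw : 0 ≤ w := by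
    have : (m : ℝ) ≤ N := by exact_mod_cast hmN
    simp only [w]; apply div_nonneg <;> nlinarith
  have hmean : (m * u + w) / (m + 1) = (x + N * u) / (N + 1) := by
    simp only [w]; field_simp; ring
  calc _ = ((N + 1).choose (m + 1) : ℝ) * (u ^ m * w) := by
        simp only [w]; field_simp; linear_combination u ^ m * (u * h2 + x * h1)
    _ ≤ _ := by rw [← hmean]; gcongr; exact pow_mul_le_add_div_pow_succ hu hw m

theorem Finset.sum_powersetCard_prod_le {ι : Type*} [DecidableEq ι] (s : Finset ι) {y : ι → ℝ}
    (hy : ∀ i ∈ s, 0 ≤ y i) (n : ℕ) :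
    ∑ A ∈ s.powersetCard n, ∏ i ∈ A, y i ≤ (#s).choose n * ((∑ i ∈ s, y i) / #s) ^ n := by
  induction s using Finset.induction_on generalizing n with
  | empty =>
    rcases n with _ | m
    · simp
    · rw [powersetCard_eq_empty.2 (by simp)]; simp
  | insert j s hj ih =>
    have hys : ∀ i ∈ s, 0 ≤ y i := fun i hi ↦ hy i (mem_insert_of_mem hi)
    have hyj : 0 ≤ y j := hy j (mem_insert_self j s)
    have hu : 0 ≤ (∑ i ∈ s, y i) / #s := div_nonneg (sum_nonneg hys) (Nat.cast_nonneg _)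
    have hsum : #s * ((∑ i ∈ s, y i) / #s) = ∑ i ∈ s, y i := by
      rcases s.eq_empty_or_nonempty with rfl | hne
      · simp
      · exact mul_div_cancel₀ _ (by positivity)
    cases n with
    | zero => simp
    | succ m =>
      have hdisj : Disjoint (s.powersetCard (m + 1)) ((s.powersetCard m).image (insert j)) := by
        simp only [disjoint_left, mem_powersetCard, mem_image]
        rintro A ⟨hAs, -⟩ ⟨B, -, rfl⟩
        exact hj (hAs (mem_insert_self j B))
      have hinj : Set.InjOn (insert j) (s.powersetCard m : Set (Finset ι)) := fun A hA B hB hAB ↦ by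
        rw [mem_coe, mem_powersetCard] at hA hB
        rw [← erase_insert (fun h ↦ hj (hA.1 h)), hAB, erase_insert (fun h ↦ hj (hB.1 h))]
      rw [powersetCard_succ_insert hj, sum_union hdisj, sum_image hinj, card_insert_of_notMem hj,
        sum_insert hj, Nat.cast_add_one]
      calc _ = ∑ A ∈ s.powersetCard (m + 1), ∏ i ∈ A, y i
            + y j * ∑ A ∈ s.powersetCard m, ∏ i ∈ A, y i := by
            rw [mul_sum]
            refine congrArg _ (sum_congr rfl fun A hA ↦ prod_insert fun h ↦ hj ?_)
            exact (mem_powersetCard.1 hA).1 h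
        _ ≤ _ := add_le_add (ih hys _) (mul_le_mul_of_nonneg_left (ih hys _) hyj)
        _ ≤ _ := choose_mul_pow_add_le _ _ hu hyj
        _ = _ := by rw [hsum]

open ProbabilityTheory MeasureTheory in
lemma one_sub_add_mul_exp_le {p : ℝ} (hp0 : 0 ≤ p) (hp1 : p ≤ 1) (s : ℝ) :
    1 - p + p * exp s ≤ exp (s * p + s ^ 2 / 8) := by
  let μ : Measure Bool := Ber(true, false, ⟨p, hp0, hp1⟩)
  let X : Bool → ℝ := fun b ↦ if b then 1 else 0
  have hoeffding := (hasSubgaussianMGF_of_mem_Icc (μ := μ) (a := 0) (b := 1) (X := X)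
    (by fun_prop) (ae_of_all _ fun b ↦ by cases b <;> simp [X])).mgf_le s
  have hmgf : mgf (fun b ↦ X b - μ[X]) μ s = exp (-(s * p)) * (1 - p + p * exp s) := by
    simp only [mgf, μ, X, integral_bernoulliMeasure, ↓reduceIte, smul_eq_mul, mul_one,
      Bool.false_eq_true, mul_zero, add_zero, zero_sub, mul_neg]
    rw [show s * (1 - p) = -(s * p) + s by ring, exp_add]
    ring
  rw [hmgf, ← le_div_iff₀' (exp_pos _), ← exp_sub] at hoeffding
  refine hoeffding.trans_eq (congrArg exp ?_)
  norm_num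
  ring

lemma card_filter_lt_mul_exp_le {α : Type*} (Ω : Finset α) (X : α → ℝ) {s : ℝ} (hs : 0 ≤ s)
    (t : ℝ) : #{A ∈ Ω | t < X A} * exp (s * t) ≤ ∑ A ∈ Ω, exp (s * X A) := by
  calc #{A ∈ Ω | t < X A} * exp (s * t) = ∑ A ∈ Ω with t < X A, exp (s * t) := by
        rw [sum_const, nsmul_eq_mul]
    _ ≤ ∑ A ∈ Ω with t < X A, exp (s * X A) :=
        sum_le_sum fun A hA ↦ exp_le_exp.2 (by gcongr; exact (mem_filter.1 hA).2.le)
    _ ≤ ∑ A ∈ Ω, exp (s * X A) :=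
        sum_le_sum_of_subset_of_nonneg (filter_subset _ _) fun _ _ _ ↦ (exp_pos _).le

lemma card_filter_lt_abs_le {α : Type*} [DecidableEq α] (Ω : Finset α) (X : α → ℝ) (t : ℝ) :
    #{A ∈ Ω | t < |X A|} ≤ #{A ∈ Ω | t < X A} + #{A ∈ Ω | t < -X A} := by
  simp only [lt_abs]
  rw [filter_or]
  exact card_union_le _ _

section Hypergeometric

variable {ι : Type*} [Fintype ι] [DecidableEq ι] [Nonempty ι]

lemma sum_powersetCard_pow_card_inter_le (R : Finset ι) {x : ℝ} (hx : 0 ≤ x) (n : ℕ) :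
    ∑ A ∈ powersetCard n univ, x ^ #(A ∩ R)
      ≤ (Fintype.card ι).choose n
        * (1 - #R / Fintype.card ι + #R / Fintype.card ι * x) ^ n := by
  have hy : ∀ i ∈ univ, 0 ≤ if i ∈ R then x else 1 := fun i _ ↦ by split_ifs <;> positivity
  have h := sum_powersetCard_prod_le univ hy n
  rw [card_univ] at h
  convert h using 3 with A
  · rw [prod_ite_mem, prod_const]
  · simp only [sum_ite, subset_univ, filter_mem_eq_of_subset, sum_const, nsmul_eq_mul,
      filter_notMem_eq_sdiff, mul_one]
    rw [card_univ_sdiff, Nat.cast_sub R.card_le_univ]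
    field_simp
    ring

lemma card_filter_lt_card_inter_sub_le (R : Finset ι) {n : ℕ} (hn : 0 < n) {t : ℝ}
    (ht : 0 ≤ t) :
    (#{A ∈ powersetCard n univ | t < #(A ∩ R) - n * #R / Fintype.card ι} : ℝ)
      ≤ (Fintype.card ι).choose n * exp (-2 * t ^ 2 / n) := by
  set p : ℝ := #R / Fintype.card ι
  have hp0 : 0 ≤ p := by positivity
  have hp1 : p ≤ 1 := div_le_one_of_le₀ (by exact_mod_cast R.card_le_univ) (Nat.cast_nonneg _)
  have hmean : (n * #R / Fintype.card ι : ℝ) = n * p := mul_div_assoc _ _ _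
  -- Chernoff's bound with the optimal exponent `s = 4 t / n`
  set s : ℝ := 4 * t / n
  have hs : 0 ≤ s := by positivity
  have hmgf : ∑ A ∈ powersetCard n univ, exp (s * (#(A ∩ R) - n * p))
      ≤ exp (-(s * (n * p))) * ((Fintype.card ι).choose n * exp (s * p + s ^ 2 / 8) ^ n) := by
    have hfactor : ∑ A ∈ powersetCard n univ, exp (s * (#(A ∩ R) - n * p))
        = exp (-(s * (n * p))) * ∑ A ∈ powersetCard n univ, exp s ^ #(A ∩ R) := by
      rw [mul_sum]
      refine sum_congr rfl fun A _ ↦ ?_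
      rw [← exp_nat_mul, ← exp_add]
      ring_nf
    rw [hfactor]
    gcongr
    refine (sum_powersetCard_pow_card_inter_le R (exp_pos s).le n).trans ?_
    gcongr
    exact one_sub_add_mul_exp_le hp0 hp1 s
  simp only [hmean]
  have h := (card_filter_lt_mul_exp_le _ _ hs t).trans hmgf
  rw [← le_div_iff₀ (exp_pos _)] at h
  refine h.trans_eq ?_
  rw [← exp_nat_mul, ← mul_assoc, mul_comm _ (Nat.cast _), mul_assoc, ← exp_add, mul_div_assoc,
    ← exp_sub]
  congr 2
  simp only [s]
  field_simp
  ring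

lemma card_inter_compl_sub_eq_neg (R : Finset ι) {A : Finset ι} {n : ℕ} (hA : #A = n) :
    (#(A ∩ Rᶜ) : ℝ) - n * #Rᶜ / Fintype.card ι = -(#(A ∩ R) - n * #R / Fintype.card ι) := by
  have hA' : #(A ∩ Rᶜ) + #(A ∩ R) = n := by
    rw [← sdiff_eq_inter_compl, card_sdiff_add_card_inter, hA]
  rw [card_compl, Nat.cast_sub R.card_le_univ, ← hA', Nat.cast_add]
  field_simp
  ring

end Hypergeometric

theorem stmt_10 (a b : ℕ) (hb0 : 0 < b) (hba : b ≤ a) (Red : Finset (Fin a))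
    (t : ℝ) (ht : 0 ≤ t) :
    let Ω := Finset.powersetCard b (Finset.univ : Finset (Fin a))
    ((Ω.filter (fun A =>
        |((A ∩ Red).card : ℝ) - (b : ℝ) * (Red.card : ℝ) / (a : ℝ)| > t)).card : ℝ)
      / (Ω.card : ℝ) ≤ 2 * Real.exp (-2 * t ^ 2 / b) := by
  intro Ω
  have : Nonempty (Fin a) := ⟨⟨0, by omega⟩⟩
  have hΩ : (#Ω : ℝ) = a.choose b := by simp [Ω]
  have hupper := card_filter_lt_card_inter_sub_le Red hb0 ht
  have hlower := card_filter_lt_card_inter_sub_le Redᶜ hb0 ht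
  rw [filter_congr fun A hA ↦ by
    rw [card_inter_compl_sub_eq_neg Red (mem_powersetCard.1 hA).2]] at hlower
  simp only [Fintype.card_fin] at hupper hlower
  rw [hΩ, div_le_iff₀ (by exact_mod_cast Nat.choose_pos hba)]
  refine (Nat.cast_le.2 (card_filter_lt_abs_le Ω _ t)).trans ?_
  push_cast
  linarith
end

section
/- For any two injective maps π, ρ from {1,...,n} to {1,...,n} (i.e., permutations), the number of inversions K = |{(i,j) : i < j under ρ-order but reversed under π}| and the footrule F = Σᵢ |π(i) - ρ(i)| satisfy K ≤ F ≤ 2K. -/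
/-!
Let `A a = discordantAfter π ρ a` be the set of `b` that `ρ` ranks after `a` and `π` ranks
before `a`, and `B a = discordantAfter ρ π a`. Every discordant pair is counted once in some
`A a` and once in some `B a`, so `∑ a, (#A a + #B a) = 2K`, while counting ranks gives
`#A a - #B a = π a - ρ a`. This yields `F ≤ 2K` at once. For `K ≤ F`, write
`#A a + #B a = |π a - ρ a| + 2 min (#A a) (#B a)` and bound the minimum by the number
`c (ρ a)` of elements crossing the cut after position `ρ a`, i.e. ranked at most `ρ a` by `ρ`
and above it by `π` (as many cross the other way). Since `F = 2 ∑ k, c k`, summing gives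
`2K ≤ F + F`.
-/

open Finset

theorem Finset.card_filter_and_not_comm {α : Type*} (s : Finset α) (p q : α → Prop)
    [DecidablePred p] [DecidablePred q] (h : #(s.filter p) = #(s.filter q)) :
    #{a ∈ s | p a ∧ ¬q a} = #{a ∈ s | q a ∧ ¬p a} := by
  have hp := card_filter_add_card_filter_not (s := s.filter p) q
  have hq := card_filter_add_card_filter_not (s := s.filter q) p
  simp only [filter_filter] at hp hq
  have : #{a ∈ s | p a ∧ q a} = #{a ∈ s | q a ∧ p a} := by simp_rw [and_comm]
  omega

theorem Finset.card_filter_prod_eq_two_mul {α : Type*} [Fintype α] [LinearOrder α]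
    (r : α → α → Prop) [DecidableRel r] (hsymm : ∀ a b, r a b → r b a) (hirr : ∀ a, ¬r a a) :
    #{p : α × α | r p.1 p.2} = 2 * #{p : α × α | p.1 < p.2 ∧ r p.1 p.2} := by
  have hswap : #{p : α × α | p.1 < p.2 ∧ r p.1 p.2} = #{p : α × α | ¬p.1 < p.2 ∧ r p.1 p.2} := by
    refine card_equiv (Equiv.prodComm α α) fun p => ?_
    simp only [mem_filter, mem_univ, true_and, Equiv.prodComm_apply, Prod.fst_swap, Prod.snd_swap]
    refine ⟨fun ⟨hlt, hr⟩ => ⟨hlt.not_gt, hsymm _ _ hr⟩, fun ⟨hge, hr⟩ => ⟨?_, hsymm _ _ hr⟩⟩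
    exact (not_lt.mp hge).lt_of_ne fun h => hirr p.1 (h ▸ hr)
  have := card_filter_add_card_filter_not (s := {p : α × α | r p.1 p.2}) (fun p => p.1 < p.2)
  simp only [filter_filter, and_comm (a := r _ _)] at this
  omega

theorem Equiv.card_filter_apply {α β : Type*} [Fintype α] [Fintype β] (e : α ≃ β)
    (p : β → Prop) [DecidablePred p] : #{a | p (e a)} = #{b | p b} :=
  card_equiv e fun a => by simp

theorem Fin.natCast_card_Ico_add_card_Ico {n : ℕ} (i j : Fin n) :
    ((#(Ico i j) + #(Ico j i) : ℕ) : ℤ) = |(j : ℤ) - i| := by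
  rw [Fin.card_Ico, Fin.card_Ico]
  rcases le_total (i : ℕ) j with h | h
  · rw [abs_of_nonneg (by omega)]; omega
  · rw [abs_of_nonpos (by omega)]; omega

namespace DiaconisGraham

variable {α : Type*} {n : ℕ}

def Discordant (π ρ : α ≃ Fin n) (a b : α) : Prop :=
  π a < π b ∧ ρ b < ρ a ∨ π b < π a ∧ ρ a < ρ b

instance (π ρ : α ≃ Fin n) : DecidableRel (Discordant π ρ) := fun _ _ => by
  unfold Discordant; infer_instance

theorem Discordant.symm {π ρ : α ≃ Fin n} {a b : α} (h : Discordant π ρ a b) :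
    Discordant π ρ b a :=
  Or.symm h

theorem not_discordant_self (π ρ : α ≃ Fin n) (a : α) : ¬Discordant π ρ a a := by
  simp [Discordant]

variable [Fintype α]

def discordantAfter (π ρ : α ≃ Fin n) (a : α) : Finset α := {b | ρ a < ρ b ∧ π b < π a}

def crossing (π ρ : α ≃ Fin n) (k : Fin n) : Finset α := {b | ρ b ≤ k ∧ k < π b}

theorem card_filter_discordant (π ρ : α ≃ Fin n) (a : α) :
    #{b | Discordant π ρ a b} = #(discordantAfter π ρ a) + #(discordantAfter ρ π a) := by
  classical
  rw [add_comm, ← card_union_of_disjoint]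
  · congr 1
    ext b
    simp only [discordantAfter, mem_filter, mem_union, mem_univ, true_and]
    unfold Discordant
    tauto
  · exact disjoint_filter.2 fun b _ hab hba => lt_asymm hab.1 hba.2

theorem card_discordant_eq_sum (π ρ : α ≃ Fin n) :
    #{p : α × α | Discordant π ρ p.1 p.2} =
      ∑ a, (#(discordantAfter π ρ a) + #(discordantAfter ρ π a)) := by
  simp only [card_filter, Fintype.sum_prod_type, ← card_filter_discordant]

theorem card_filter_apply_lt (π : α ≃ Fin n) (a : α) : #{b | π b < π a} = π a := by
  rw [π.card_filter_apply (· < π a), ← Fin.card_Iio]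
  congr 1
  ext; simp

theorem card_discordantAfter_sub (π ρ : α ≃ Fin n) (a : α) :
    (#(discordantAfter π ρ a) : ℤ) - #(discordantAfter ρ π a) = (π a : ℤ) - ρ a := by
  have hπ := card_filter_add_card_filter_not (s := {b | π b < π a}) (fun b => ρ b < ρ a)
  have hρ := card_filter_add_card_filter_not (s := {b | ρ b < ρ a}) (fun b => π b < π a)
  rw [card_filter_apply_lt] at hπ hρ
  simp only [filter_filter] at hπ hρ
  have hA : ({b | π b < π a ∧ ¬ρ b < ρ a} : Finset α) = discordantAfter π ρ a :=
    filter_congr fun b _ => by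
      rw [not_lt, le_iff_lt_or_eq, EmbeddingLike.apply_eq_iff_eq]
      grind
  have hB : ({b | ρ b < ρ a ∧ ¬π b < π a} : Finset α) = discordantAfter ρ π a :=
    filter_congr fun b _ => by
      rw [not_lt, le_iff_lt_or_eq, EmbeddingLike.apply_eq_iff_eq]
      grind
  have hC : ({b | π b < π a ∧ ρ b < ρ a} : Finset α) = ({b | ρ b < ρ a ∧ π b < π a} : Finset α) := by
    simp_rw [and_comm]
  rw [hA, hC] at hπ
  rw [hB] at hρ
  omega

theorem abs_sub_le_card_discordantAfter_add (π ρ : α ≃ Fin n) (a : α) :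
    |(π a : ℤ) - ρ a| ≤ #(discordantAfter π ρ a) + #(discordantAfter ρ π a) := by
  rw [← card_discordantAfter_sub, abs_sub_le_iff]
  omega

theorem card_crossing_comm (π ρ : α ≃ Fin n) (k : Fin n) :
    #(crossing π ρ k) = #(crossing ρ π k) := by
  simp only [crossing, ← not_le]
  exact card_filter_and_not_comm _ _ _ <| by
    rw [ρ.card_filter_apply (· ≤ k), π.card_filter_apply (· ≤ k)]

theorem min_card_discordantAfter_le (π ρ : α ≃ Fin n) (a : α) :
    min #(discordantAfter π ρ a) #(discordantAfter ρ π a) ≤ #(crossing π ρ (ρ a)) := by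
  rcases le_or_gt (π a) (ρ a) with h | h
  · refine (min_le_left _ _).trans ?_
    rw [card_crossing_comm]
    refine card_le_card fun b hb => ?_
    simp only [discordantAfter, crossing, mem_filter, mem_univ, true_and] at hb ⊢
    exact ⟨(hb.2.trans_le h).le, hb.1⟩
  · refine (min_le_right _ _).trans <| card_le_card fun b hb => ?_
    simp only [discordantAfter, crossing, mem_filter, mem_univ, true_and] at hb ⊢
    exact ⟨hb.2.le, h.trans hb.1⟩

theorem card_discordantAfter_add_le (π ρ : α ≃ Fin n) (a : α) :
    (#(discordantAfter π ρ a) + #(discordantAfter ρ π a) : ℤ) ≤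
      |(π a : ℤ) - ρ a| + 2 * #(crossing π ρ (ρ a)) := by
  rw [← card_discordantAfter_sub]
  have hmin : (min #(discordantAfter π ρ a) #(discordantAfter ρ π a) : ℤ) ≤
      #(crossing π ρ (ρ a)) := by exact_mod_cast min_card_discordantAfter_le π ρ a
  rcases min_le_iff.mp hmin with h | h
  · linarith [neg_abs_le ((#(discordantAfter π ρ a) : ℤ) - #(discordantAfter ρ π a))]
  · linarith [le_abs_self ((#(discordantAfter π ρ a) : ℤ) - #(discordantAfter ρ π a))]

theorem sum_abs_sub_eq_sum_crossing (π ρ : α ≃ Fin n) :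
    ∑ a, |(π a : ℤ) - ρ a| = ∑ k, ((#(crossing π ρ k) + #(crossing ρ π k) : ℕ) : ℤ) := by
  simp_rw [← Fin.natCast_card_Ico_add_card_Ico, ← Nat.cast_sum, sum_add_distrib]
  have hIco : ∀ (σ τ : α ≃ Fin n) a,
      Ico (τ a) (σ a) = univ.bipartiteAbove (fun b k => τ b ≤ k ∧ k < σ b) a := fun σ τ a => by
    ext; simp
  simp only [hIco]
  rw [sum_card_bipartiteAbove_eq_sum_card_bipartiteBelow,
    sum_card_bipartiteAbove_eq_sum_card_bipartiteBelow]
  rfl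

theorem sum_card_discordantAfter_add_le (π ρ : α ≃ Fin n) :
    ∑ a, (#(discordantAfter π ρ a) + #(discordantAfter ρ π a) : ℤ) ≤
      2 * ∑ a, |(π a : ℤ) - ρ a| := calc
  _ ≤ ∑ a, (|(π a : ℤ) - ρ a| + 2 * #(crossing π ρ (ρ a))) :=
    sum_le_sum fun a _ => card_discordantAfter_add_le π ρ a
  _ = ∑ a, |(π a : ℤ) - ρ a| + 2 * ∑ k, (#(crossing π ρ k) : ℤ) := by
    rw [sum_add_distrib, ← mul_sum, ρ.sum_comp (fun k => (#(crossing π ρ k) : ℤ))]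
  _ = 2 * ∑ a, |(π a : ℤ) - ρ a| := by
    simp only [sum_abs_sub_eq_sum_crossing π ρ, card_crossing_comm ρ π, Nat.cast_add,
      sum_add_distrib]
    ring

end DiaconisGraham

open DiaconisGraham

/-- Diaconis–Graham inequality: Kendall's tau `K` and Spearman's footrule `F`
between two permutations satisfy `K ≤ F ≤ 2K`. -/
theorem stmt_13 (n : ℕ) (π ρ : Equiv.Perm (Fin n)) :
    let K : ℕ := (Finset.univ.filter (fun p : Fin n × Fin n =>
      p.1 < p.2 ∧
        (((π p.1).val : ℤ) - ((π p.2).val : ℤ)) * (((ρ p.1).val : ℤ) - ((ρ p.2).val : ℤ)) < 0)).card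
    let F : ℤ := ∑ i : Fin n, |((π i).val : ℤ) - ((ρ i).val : ℤ)|
    (K : ℤ) ≤ F ∧ F ≤ 2 * K := by
  intro K F
  have hK : K = #{p : Fin n × Fin n | p.1 < p.2 ∧ Discordant π ρ p.1 p.2} :=
    congrArg card <| filter_congr fun p _ => by
      simp only [Discordant, mul_neg_iff, sub_pos, sub_neg, Nat.cast_lt, Fin.val_fin_lt]
      tauto
  have hKsum : 2 * (K : ℤ) =
      ∑ a, (#(discordantAfter π ρ a) + #(discordantAfter ρ π a) : ℤ) := by
    rw [hK]
    exact_mod_cast (card_filter_prod_eq_two_mul (Discordant π ρ) (fun _ _ => Discordant.symm)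
      (not_discordant_self π ρ)).symm.trans (card_discordant_eq_sum π ρ)
  have hupper := sum_le_sum fun a (_ : a ∈ univ) => abs_sub_le_card_discordantAfter_add π ρ a
  have hlower := sum_card_discordantAfter_add_le π ρ
  constructor <;> linarith
end

section
/- Let X₁,...,X_t be independent Bernoulli random variables each with success probability s/n, and X = ΣX_i, and suppose s ≥ 2α·max(1, (t/(n-t))²) for some α ≥ 1 and t < n. Then ℙ(X ≥ s) ≤ exp(-c·α) for some universal constant c > 0. -/
set_option maxHeartbeats 1600000 in
/-- Chernoff bound used for "popular intervals": a Binomial(t, s/n) variable exceeds `s`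
with probability at most `exp (-c α)` whenever `s ≥ 2 α max(1, (t/(n-t))²)`. -/
theorem stmt_14 :
    ∃ c : ℝ, 0 < c ∧ ∀ (n t s : ℕ) (α : ℝ), 0 < t → t < n → 0 < s → s ≤ n → 1 ≤ α →
      2 * α * max 1 (((t : ℝ) / ((n : ℝ) - t)) ^ 2) ≤ (s : ℝ) →
      ∑ j ∈ Finset.Icc s t,
          (t.choose j : ℝ) * ((s : ℝ) / n) ^ j * (1 - (s : ℝ) / n) ^ (t - j)
        ≤ Real.exp (-c * α) := by
  refine ⟨1/8, by norm_num, ?_⟩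
  intro n t s α ht htn hs hsn hα hmax
  have hα0 : (0:ℝ) < α := lt_of_lt_of_le one_pos hα
  have hT : (0:ℝ) < (t:ℝ) := by exact_mod_cast ht
  have hTN : (t:ℝ) < (n:ℝ) := by exact_mod_cast htn
  have hN : (0:ℝ) < (n:ℝ) := lt_trans hT hTN
  have hS : (0:ℝ) < (s:ℝ) := by exact_mod_cast hs
  have hSN : (s:ℝ) ≤ (n:ℝ) := by exact_mod_cast hsn
  set N : ℝ := (n:ℝ) with hNdef
  set T : ℝ := (t:ℝ) with hTdef
  set S : ℝ := (s:ℝ) with hSdef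
  set p : ℝ := S / N with hpdef
  set q : ℝ := 1 - p with hqdef
  have hp0 : 0 ≤ p := div_nonneg hS.le hN.le
  have hq0 : 0 ≤ q := by
    have : p ≤ 1 := by rw [hpdef, div_le_one hN]; exact hSN
    simp [hqdef]; linarith
  set L : ℝ := 2 * N / (N + T) with hLdef
  have hNT : 0 < N + T := by linarith
  have hL1 : 1 ≤ L := by
    rw [hLdef, le_div_iff₀ hNT]; linarith
  have hL0 : 0 < L := lt_of_lt_of_le one_pos hL1
  clear_value N T S p q L
  -- Step 1: tilting bound
  have step1 : ∑ j ∈ Finset.Icc s t, (t.choose j : ℝ) * p ^ j * q ^ (t-j)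
      ≤ L⁻¹ ^ s * (L * p + q) ^ t := by
    have h1 : ∑ j ∈ Finset.Icc s t, (t.choose j : ℝ) * p ^ j * q ^ (t-j)
        ≤ ∑ j ∈ Finset.Icc s t, L⁻¹ ^ s * ((L * p) ^ j * q ^ (t-j) * (t.choose j : ℝ)) := by
      apply Finset.sum_le_sum
      intro j hj
      obtain ⟨hjs, hjt⟩ := Finset.mem_Icc.mp hj
      have hpow : L ^ s ≤ L ^ j := pow_le_pow_right₀ hL1 hjs
      have hLs : (0:ℝ) < L ^ s := pow_pos hL0 s
      have key : (1:ℝ) ≤ L⁻¹ ^ s * L ^ j := by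
        rw [inv_pow, ← div_eq_inv_mul, le_div_iff₀ hLs, one_mul]
        exact hpow
      have hterm : (0:ℝ) ≤ (t.choose j : ℝ) * p ^ j * q ^ (t-j) := by positivity
      calc (t.choose j : ℝ) * p ^ j * q ^ (t-j)
          ≤ (L⁻¹ ^ s * L ^ j) * ((t.choose j : ℝ) * p ^ j * q ^ (t-j)) := by
            nlinarith
        _ = L⁻¹ ^ s * ((L * p) ^ j * q ^ (t-j) * (t.choose j : ℝ)) := by
            rw [mul_pow]; ring
    have h2 : ∑ j ∈ Finset.Icc s t, L⁻¹ ^ s * ((L * p) ^ j * q ^ (t-j) * (t.choose j : ℝ))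
        ≤ ∑ j ∈ Finset.range (t+1), L⁻¹ ^ s * ((L * p) ^ j * q ^ (t-j) * (t.choose j : ℝ)) := by
      apply Finset.sum_le_sum_of_subset_of_nonneg
      · intro j hj
        obtain ⟨_, hjt⟩ := Finset.mem_Icc.mp hj
        exact Finset.mem_range.mpr (Nat.lt_succ_of_le hjt)
      · intro j _ _
        have hLp : (0:ℝ) ≤ L * p := mul_nonneg hL0.le hp0
        positivity
    have h3 : ∑ j ∈ Finset.range (t+1), L⁻¹ ^ s * ((L * p) ^ j * q ^ (t-j) * (t.choose j : ℝ))
        = L⁻¹ ^ s * (L * p + q) ^ t := by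
      rw [← Finset.mul_sum, add_pow]
    linarith
  -- Step 2: bound L⁻¹ ^ s by an exponential
  have hLinv : L⁻¹ = (N + T) / (2 * N) := by
    rw [hLdef, inv_div]
  have step2 : L⁻¹ ^ s ≤ Real.exp (S * ((T - N) / (2 * N))) := by
    have h1 : L⁻¹ ≤ Real.exp ((T - N) / (2 * N)) := by
      have := Real.add_one_le_exp ((T - N) / (2 * N))
      rw [hLinv]
      have : (N + T) / (2 * N) = (T - N) / (2 * N) + 1 := by field_simp; ring
      rw [this]
      exact Real.add_one_le_exp _
    calc L⁻¹ ^ s ≤ Real.exp ((T - N) / (2 * N)) ^ s :=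
          pow_le_pow_left₀ (inv_nonneg.mpr hL0.le) h1 s
      _ = Real.exp ((s:ℕ) * ((T - N) / (2 * N))) := (Real.exp_nat_mul _ s).symm
      _ = Real.exp (S * ((T - N) / (2 * N))) := by norm_num [hSdef]
  -- Step 3: bound (L p + q) ^ t
  have step3 : (L * p + q) ^ t ≤ Real.exp (T * ((L - 1) * p)) := by
    have h1 : L * p + q ≤ Real.exp ((L - 1) * p) := by
      have : L * p + q = (L - 1) * p + 1 := by rw [hqdef]; ring
      rw [this]; exact Real.add_one_le_exp _
    have h0 : 0 ≤ L * p + q := add_nonneg (mul_nonneg hL0.le hp0) hq0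
    calc (L * p + q) ^ t ≤ Real.exp ((L - 1) * p) ^ t := pow_le_pow_left₀ h0 h1 t
      _ = Real.exp ((t:ℕ) * ((L - 1) * p)) := (Real.exp_nat_mul _ t).symm
      _ = Real.exp (T * ((L - 1) * p)) := by norm_num [hTdef]
  -- Combine
  have combine : ∑ j ∈ Finset.Icc s t, (t.choose j : ℝ) * p ^ j * q ^ (t-j)
      ≤ Real.exp (S * ((T - N) / (2 * N)) + T * ((L - 1) * p)) := by
    calc ∑ j ∈ Finset.Icc s t, (t.choose j : ℝ) * p ^ j * q ^ (t-j)
        ≤ L⁻¹ ^ s * (L * p + q) ^ t := step1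
      _ ≤ Real.exp (S * ((T - N) / (2 * N))) * Real.exp (T * ((L - 1) * p)) := by
          apply mul_le_mul step2 step3 (by positivity) (Real.exp_pos _).le
      _ = Real.exp (S * ((T - N) / (2 * N)) + T * ((L - 1) * p)) := (Real.exp_add _ _).symm
  -- Step 4: the exponent is at most -(1/8) α
  have hNT0 : (0:ℝ) < N - T := by linarith
  have hM : (1:ℝ) ≤ max 1 ((T / (N - T)) ^ 2) := le_max_left _ _
  have hmax1 : 2 * α ≤ S := by
    calc 2 * α = 2 * α * 1 := by ring
      _ ≤ 2 * α * max 1 ((T / (N - T)) ^ 2) :=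
          mul_le_mul_of_nonneg_left hM (by positivity)
      _ ≤ S := hmax
  have hmax2 : 2 * α * T ^ 2 ≤ S * (N - T) ^ 2 := by
    have hM2 : (T / (N - T)) ^ 2 ≤ max 1 ((T / (N - T)) ^ 2) := le_max_right _ _
    have h2 : 2 * α * (T / (N - T)) ^ 2 ≤ S :=
      le_trans (mul_le_mul_of_nonneg_left hM2 (by positivity)) hmax
    have hNT2 : (0:ℝ) < (N - T) ^ 2 := pow_pos hNT0 2
    have hdp : (T / (N - T)) ^ 2 = T ^ 2 / (N - T) ^ 2 := div_pow T (N - T) 2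
    rw [hdp] at h2
    have h3 : 2 * α * (T ^ 2 / (N - T) ^ 2) * (N - T) ^ 2 ≤ S * (N - T) ^ 2 :=
      mul_le_mul_of_nonneg_right h2 hNT2.le
    have h4 : 2 * α * (T ^ 2 / (N - T) ^ 2) * (N - T) ^ 2 = 2 * α * T ^ 2 := by
      field_simp
    linarith
  have hA : 2 * α * (N - T) ^ 2 ≤ S * (N - T) ^ 2 :=
    mul_le_mul_of_nonneg_right hmax1 (sq_nonneg _)
  have key : α * (N * (N + T)) ≤ 4 * (S * (N - T) ^ 2) := by
    nlinarith [sq_nonneg (2 * T - N), hα0, hT, hTN]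
  have hexp : S * ((T - N) / (2 * N)) + T * ((L - 1) * p) ≤ -(1/8) * α := by
    have hL1' : L - 1 = (N - T) / (N + T) := by
      rw [hLdef]; field_simp; ring
    rw [hL1', hpdef]
    have hNne : N ≠ 0 := ne_of_gt hN
    have hNTne : N + T ≠ 0 := ne_of_gt hNT
    have hE : S * ((T - N) / (2 * N)) + T * ((N - T) / (N + T) * (S / N))
        = -(S * (N - T) ^ 2) / (2 * N * (N + T)) := by
      field_simp
      ring
    have hD : (0:ℝ) < 2 * N * (N + T) := by nlinarith
    rw [hE, div_le_iff₀ hD]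
    nlinarith [key]
  calc ∑ j ∈ Finset.Icc s t, (t.choose j : ℝ) * p ^ j * q ^ (t-j)
      ≤ Real.exp (S * ((T - N) / (2 * N)) + T * ((L - 1) * p)) := combine
    _ ≤ Real.exp (-(1/8) * α) := Real.exp_le_exp.mpr hexp
end

section
/- Let H_n denote the height of a binary search tree built by inserting a uniformly random permutation of n distinct keys. Then for every real k > 2, ℙ(H_n ≥ k·ln n) ≤ (1/n)·(2e/k)^{k·ln n}. -/
/-- Binary trees with natural-number keys. -/
inductive BTree where
  | leaf : BTree
  | node : BTree → ℕ → BTree → BTree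

/-- Number of nodes on the longest root-to-leaf path (so a single node has height 1). -/
def BTree.height : BTree → ℕ
  | .leaf => 0
  | .node l _ r => max l.height r.height + 1

/-- Standard BST insertion. -/
def BTree.insert (x : ℕ) : BTree → BTree
  | .leaf => .node .leaf x .leaf
  | .node l a r => if x < a then .node (l.insert x) a r else .node l a (r.insert x)

/-- Build a BST by inserting the keys `π 0, π 1, …, π (n-1)` in this order. -/
def buildBST (n : ℕ) (π : Equiv.Perm (Fin n)) : BTree :=
  (List.finRange n).foldl (fun T i => T.insert (π i).val) .leaf

/-!
Markov's inequality for the weight `W(T) = ∑_{v ∈ T} c ^ depth v` with `c = k / 2`, which is at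
least `c ^ (H - 1)`. The root of the tree built from a uniformly random ordering is uniform and,
given the root, the keys on either side arrive in a uniformly random order, so
`E W_m = 1 + (k / m) ∑_{j < m} E W_j`; induction with `m + k ∑_{j < m} j ^ (k - 1) ≤ m ^ k`
then gives `E W_n ≤ n ^ (k - 1)`. Hence `ℙ(H_n - 1 ≥ x) ≤ n ^ (k - 1) / c ^ x`, which is
`(1 / n) (2e / k) ^ x` at `x = k ln n`.
-/

open Finset
open scoped Nat

namespace Finset

variable {α : Type*}

theorem sum_comp_card_filter_lt {M : Type*} [LinearOrder α] [AddCommMonoid M]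
    (s : Finset α) (f : ℕ → M) :
    ∑ a ∈ s, f #(s.filter (· < a)) = ∑ j ∈ range #s, f j := by
  induction s using Finset.induction_on_max with
  | empty => simp
  | insert a s hlt ih =>
    have ha : a ∉ s := fun h => lt_irrefl a (hlt a h)
    rw [sum_insert ha, card_insert_of_notMem ha, sum_range_succ, add_comm, filter_insert,
      if_neg (lt_irrefl a), filter_true_of_mem hlt, ← ih]
    congr 1
    refine sum_congr rfl fun b hb => ?_
    rw [filter_insert, if_neg (hlt b hb).not_gt]

def orderings (s : Finset α) : Finset (List α) :=
  ⟨Multiset.lists s.val, Multiset.lists_nodup_finset s⟩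

theorem card_orderings (s : Finset α) : #s.orderings = (#s)! := by
  rw [orderings, card_mk, ← s.coe_toList, Multiset.lists_coe, Multiset.coe_card,
    List.length_permutations, length_toList]

variable [DecidableEq α]

theorem mem_orderings {s : Finset α} {r : List α} :
    r ∈ s.orderings ↔ r.Nodup ∧ r.toFinset = s := by
  rw [orderings, mem_mk, Multiset.mem_lists_iff, Multiset.quot_mk_to_coe]
  constructor
  · intro h
    have hr : r.Nodup := Multiset.coe_nodup.mp (h ▸ s.nodup)
    exact ⟨hr, val_injective (by rw [h, List.toFinset_val, hr.dedup])⟩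
  · rintro ⟨hr, rfl⟩
    rw [List.toFinset_val, hr.dedup]

theorem cons_mem_orderings {s : Finset α} {a : α} {r : List α} :
    a :: r ∈ s.orderings ↔ a ∈ s ∧ r ∈ (s.erase a).orderings := by
  simp only [mem_orderings, List.nodup_cons, List.toFinset_cons]
  constructor
  · rintro ⟨⟨ha, hr⟩, rfl⟩
    exact ⟨mem_insert_self a _, hr, by rw [erase_insert (by simpa using ha)]⟩
  · rintro ⟨ha, hr, hrs⟩
    exact ⟨⟨fun h => by simpa [hrs] using List.mem_toFinset.mpr h, hr⟩,
      by rw [hrs, insert_erase ha]⟩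

@[simp]
theorem orderings_empty : (∅ : Finset α).orderings = {[]} := by
  ext r
  simp only [mem_orderings, List.toFinset_eq_empty_iff, mem_singleton]
  exact ⟨And.right, fun h => ⟨h ▸ List.nodup_nil, h⟩⟩

theorem sum_orderings_eq_sum_sum_cons {M : Type*} [AddCommMonoid M] {s : Finset α}
    (f : List α → M) (hs : s.Nonempty) :
    ∑ r ∈ s.orderings, f r = ∑ a ∈ s, ∑ r ∈ (s.erase a).orderings, f (a :: r) := by
  rw [sum_sigma']
  symm
  refine sum_bij (fun x _ => x.1 :: x.2) ?_ ?_ ?_ fun _ _ => rfl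
  · rintro ⟨a, r⟩ h
    exact cons_mem_orderings.mpr (mem_sigma.mp h)
  · rintro ⟨a, r⟩ - ⟨b, q⟩ - h
    obtain ⟨rfl, rfl⟩ := List.cons_eq_cons.mp h
    rfl
  · intro r hr
    cases r with
    | nil =>
      obtain ⟨-, h⟩ := mem_orderings.mp hr
      exact absurd h.symm hs.ne_empty
    | cons a r => exact ⟨⟨a, r⟩, mem_sigma.mpr (cons_mem_orderings.mp hr), rfl⟩

/-- The elements of a uniformly random ordering of `s` that satisfy `p` appear in a uniformly
random ordering of `s.filter p`. -/
theorem factorial_nsmul_sum_orderings_filter {M : Type*} [AddCommMonoid M] (p : α → Prop)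
    [DecidablePred p] (g : List α → M) (s : Finset α) :
    (#(s.filter p))! • ∑ r ∈ s.orderings, g (r.filter p)
      = (#s)! • ∑ q ∈ (s.filter p).orderings, g q := by
  induction s using Finset.strongInduction generalizing g with
  | H s ih =>
  rcases s.eq_empty_or_nonempty with rfl | hs
  · simp
  have hin : ∀ a ∈ s.filter p,
      (#(s.filter p))! • ∑ r ∈ (s.erase a).orderings, g ((a :: r).filter p)
      = #(s.filter p) • (#s - 1)! • ∑ q ∈ ((s.filter p).erase a).orderings, g (a :: q) := by
    intro a ha
    obtain ⟨has, hpa⟩ := mem_filter.mp ha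
    have := ih (s.erase a) (erase_ssubset has) (fun q => g (a :: q))
    rw [filter_erase, card_erase_of_mem ha, card_erase_of_mem has] at this
    rw [← Nat.mul_factorial_pred (card_ne_zero_of_mem ha), mul_smul, ← this]
    simp [hpa]
  have hout : ∀ a ∈ s.filter (¬ p ·), (#(s.filter p))! • ∑ r ∈ (s.erase a).orderings,
      g ((a :: r).filter p) = (#s - 1)! • ∑ q ∈ (s.filter p).orderings, g q := by
    intro a ha
    obtain ⟨has, hpa⟩ := mem_filter.mp ha
    have := ih (s.erase a) (erase_ssubset has) g
    rw [filter_erase, erase_eq_of_notMem fun h => hpa (mem_filter.mp h).2,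
      card_erase_of_mem has] at this
    rw [← this]
    simp [hpa]
  have hcons : ∑ a ∈ s.filter p, #(s.filter p) • (#s - 1)! •
      ∑ q ∈ ((s.filter p).erase a).orderings, g (a :: q)
      = #(s.filter p) • (#s - 1)! • ∑ q ∈ (s.filter p).orderings, g q := by
    rcases (s.filter p).eq_empty_or_nonempty with h | h
    · simp [h]
    · rw [sum_orderings_eq_sum_sum_cons _ h, smul_sum, smul_sum]
  rw [sum_orderings_eq_sum_sum_cons _ hs, smul_sum, ← sum_filter_add_sum_filter_not s p,
    sum_congr rfl hin, sum_congr rfl hout, hcons, sum_const, ← add_smul,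
    card_filter_add_card_filter_not, ← mul_smul, Nat.mul_factorial_pred hs.card_pos.ne']

theorem sum_orderings_filter_le {s : Finset α} {p : α → Prop} [DecidablePred p]
    {g : List α → ℝ} {B : ℝ}
    (h : ∑ q ∈ (s.filter p).orderings, g q ≤ (#(s.filter p))! * B) :
    ∑ r ∈ s.orderings, g (r.filter p) ≤ (#s)! * B := by
  have key := factorial_nsmul_sum_orderings_filter p g s
  simp only [nsmul_eq_mul] at key
  refine le_of_mul_le_mul_left ?_ (by positivity : (0 : ℝ) < (#(s.filter p))!)
  rw [key, mul_left_comm]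
  gcongr

end Finset

namespace Real

theorem rpow_add_mul_rpow_sub_one_add_one_le {x k : ℝ} (hx : 1 ≤ x) (hk : 2 ≤ k) :
    x ^ k + k * x ^ (k - 1) + 1 ≤ (x + 1) ^ k := by
  have hx0 : 0 < x := by linarith
  set y := x ^ (k - 2)
  have hy : 1 ≤ y := one_le_rpow hx (by linarith)
  have hk1 : x ^ (k - 1) = y * x := by rw [← rpow_add_one hx0.ne']; ring_nf
  have hk0 : x ^ k = y * x ^ 2 := by
    rw [← rpow_natCast, ← rpow_add hx0]; push_cast; ring_nf
  have hbern : y * x + (k - 1) * y ≤ (x + 1) ^ (k - 1) := by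
    have h : 1 + (k - 1) * (1 / x) ≤ (1 + 1 / x) ^ (k - 1) :=
      one_add_mul_self_le_rpow_one_add (by linarith [one_div_pos.mpr hx0]) (by linarith)
    have hxy : (x + 1) ^ (k - 1) = y * x * (1 + 1 / x) ^ (k - 1) := by
      rw [← hk1, ← mul_rpow hx0.le (by positivity)]
      field_simp
    rw [hxy]
    calc y * x + (k - 1) * y = y * x * (1 + (k - 1) * (1 / x)) := by field_simp
      _ ≤ y * x * (1 + 1 / x) ^ (k - 1) := by gcongr
  have hsucc : (x + 1) ^ k = (x + 1) * (x + 1) ^ (k - 1) := by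
    rw [mul_comm, ← rpow_add_one (by positivity)]; ring_nf
  rw [hk0, hk1, hsucc]
  nlinarith

end Real

theorem natCast_add_mul_sum_rpow_le {k : ℝ} (hk : 2 ≤ k) (m : ℕ) :
    (m : ℝ) + k * ∑ j ∈ range m, (j : ℝ) ^ (k - 1) ≤ (m : ℝ) ^ k := by
  induction m with
  | zero => simp [Real.zero_rpow (by linarith : k ≠ 0)]
  | succ m ih =>
    rw [sum_range_succ]
    rcases Nat.eq_zero_or_pos m with rfl | hm
    · simp [Real.zero_rpow (by linarith : k - 1 ≠ 0)]
    · have := Real.rpow_add_mul_rpow_sub_one_add_one_le (by exact_mod_cast hm : (1 : ℝ) ≤ m) hk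
      push_cast
      linarith

namespace BTree

def ofList (l : List ℕ) : BTree :=
  l.foldl (fun (T : BTree) x => T.insert x) .leaf

theorem foldl_insert_node (l : List ℕ) (L : BTree) (a : ℕ) (R : BTree) :
    l.foldl (fun (T : BTree) x => T.insert x) (.node L a R)
      = .node ((l.filter (· < a)).foldl (fun (T : BTree) x => T.insert x) L) a
          ((l.filter (¬ · < a)).foldl (fun (T : BTree) x => T.insert x) R) := by
  induction l generalizing L R with
  | nil => rfl
  | cons x l ih =>
    by_cases h : x < a
    · rw [List.foldl_cons, BTree.insert, if_pos h, ih, List.filter_cons_of_pos (by simpa using h),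
        List.filter_cons_of_neg (by simpa using h)]
      rfl
    · rw [List.foldl_cons, BTree.insert, if_neg h, ih, List.filter_cons_of_neg (by simpa using h),
        List.filter_cons_of_pos (by simpa using h)]
      rfl

theorem ofList_cons (a : ℕ) (l : List ℕ) :
    ofList (a :: l) = .node (ofList (l.filter (· < a))) a (ofList (l.filter (¬ · < a))) :=
  foldl_insert_node l .leaf a .leaf

theorem buildBST_eq_ofList (n : ℕ) (π : Equiv.Perm (Fin n)) :
    buildBST n π = ofList ((List.finRange n).map fun i => (π i : ℕ)) := by
  rw [buildBST, ofList, List.foldl_map]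

/-- `weight c T = ∑ c ^ depth v` over the nodes `v` of `T`, the root having depth `0`. -/
noncomputable def weight (c : ℝ) : BTree → ℝ
  | leaf => 0
  | node l _ r => 1 + c * (weight c l + weight c r)

variable {c : ℝ}

theorem weight_nonneg (hc : 0 ≤ c) : ∀ T : BTree, 0 ≤ weight c T
  | leaf => le_rfl
  | node l _ r => by
    have := weight_nonneg hc l
    have := weight_nonneg hc r
    rw [weight]
    positivity

theorem pow_max_height_le_weight_node (hc : 0 ≤ c) {l r : BTree} (a : ℕ)
    (hl : c ^ l.height ≤ 1 + c * weight c l) (hr : c ^ r.height ≤ 1 + c * weight c r) :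
    c ^ max l.height r.height ≤ weight c (node l a r) := by
  have := mul_nonneg hc (weight_nonneg hc l)
  have := mul_nonneg hc (weight_nonneg hc r)
  rw [weight]
  rcases max_choice l.height r.height with h | h <;> rw [h] <;> linarith

theorem pow_height_le_one_add_mul_weight (hc : 1 ≤ c) : ∀ T : BTree,
    c ^ T.height ≤ 1 + c * weight c T
  | leaf => by simp [weight, height]
  | node l a r => by
    have := pow_max_height_le_weight_node (zero_le_one.trans hc) a
      (pow_height_le_one_add_mul_weight hc l) (pow_height_le_one_add_mul_weight hc r)
    have := weight_nonneg (zero_le_one.trans hc) (node l a r)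
    rw [height, pow_succ']
    nlinarith

theorem rpow_le_weight (hc : 1 ≤ c) {T : BTree} {x : ℝ} (hx : 0 ≤ x)
    (hT : x ≤ T.height - 1) : c ^ x ≤ weight c T := by
  cases T with
  | leaf => simp [height] at hT; linarith
  | node l a r =>
    calc c ^ x ≤ c ^ ((max l.height r.height : ℕ) : ℝ) :=
          Real.rpow_le_rpow_of_exponent_le hc (by simpa [height] using hT)
      _ ≤ weight c (node l a r) := by
          rw [Real.rpow_natCast]
          exact pow_max_height_le_weight_node (zero_le_one.trans hc) a
            (pow_height_le_one_add_mul_weight hc l) (pow_height_le_one_add_mul_weight hc r)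

theorem sum_orderings_weight_cons_le {k : ℝ} (hk : 2 ≤ k) {s : Finset ℕ} {a : ℕ}
    (ha : a ∈ s) (ih : ∀ t ⊂ s,
      ∑ r ∈ t.orderings, weight (k / 2) (ofList r) ≤ (#t)! * (#t : ℝ) ^ (k - 1)) :
    ∑ r ∈ (s.erase a).orderings, weight (k / 2) (ofList (a :: r))
      ≤ (#s - 1)! * (1 + k / 2 * ((#(s.filter (· < a)) : ℝ) ^ (k - 1)
          + ((#s - 1 - #(s.filter (· < a)) : ℕ) : ℝ) ^ (k - 1))) := by
  have hsub : ∀ p : ℕ → Prop, ∀ [DecidablePred p], (s.erase a).filter p ⊂ s :=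
    fun p _ => (filter_subset _ _).trans_ssubset (erase_ssubset ha)
  have hlt : (s.erase a).filter (· < a) = s.filter (· < a) := by
    rw [filter_erase, erase_eq_of_notMem (by simp)]
  have hge : #((s.erase a).filter (¬ · < a)) = #s - 1 - #(s.filter (· < a)) := by
    have := card_filter_add_card_filter_not (s := s.erase a) (· < a)
    rw [hlt, card_erase_of_mem ha] at this
    omega
  have hleft := sum_orderings_filter_le (g := fun q => weight (k / 2) (ofList q))
    (ih _ (hsub (· < a)))
  have hright := sum_orderings_filter_le (g := fun q => weight (k / 2) (ofList q))
    (ih _ (hsub (¬ · < a)))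
  rw [hlt, card_erase_of_mem ha] at hleft
  rw [hge, card_erase_of_mem ha] at hright
  calc ∑ r ∈ (s.erase a).orderings, weight (k / 2) (ofList (a :: r))
      = (#s - 1)! + k / 2 *
          (∑ r ∈ (s.erase a).orderings, weight (k / 2) (ofList (r.filter (· < a)))
          + ∑ r ∈ (s.erase a).orderings, weight (k / 2) (ofList (r.filter (¬ · < a)))) := by
        simp only [ofList_cons, weight, sum_add_distrib, sum_const, card_orderings,
          card_erase_of_mem ha, ← mul_sum, nsmul_eq_mul, mul_one]
    _ ≤ (#s - 1)! + k / 2 * ((#s - 1)! * (#(s.filter (· < a)) : ℝ) ^ (k - 1)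
          + (#s - 1)! * ((#s - 1 - #(s.filter (· < a)) : ℕ) : ℝ) ^ (k - 1)) := by
        have hk0 : 0 ≤ k / 2 := by linarith
        exact add_le_add_right (mul_le_mul_of_nonneg_left (add_le_add hleft hright) hk0) _
    _ = _ := by ring

theorem sum_orderings_weight_le {k : ℝ} (hk : 2 ≤ k) (s : Finset ℕ) :
    ∑ r ∈ s.orderings, weight (k / 2) (ofList r) ≤ (#s)! * (#s : ℝ) ^ (k - 1) := by
  induction s using Finset.strongInduction with
  | H s ih =>
  rcases s.eq_empty_or_nonempty with rfl | hs
  · simp [ofList, weight, Real.zero_rpow (by linarith : k - 1 ≠ 0)]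
  set f : ℕ → ℝ := fun j => (j : ℝ) ^ (k - 1)
  have hm : (#s : ℝ) ≠ 0 := by exact_mod_cast hs.card_pos.ne'
  calc ∑ r ∈ s.orderings, weight (k / 2) (ofList r)
      = ∑ a ∈ s, ∑ r ∈ (s.erase a).orderings, weight (k / 2) (ofList (a :: r)) :=
        sum_orderings_eq_sum_sum_cons _ hs
    _ ≤ ∑ a ∈ s, (#s - 1)! * (1 + k / 2 * (f #(s.filter (· < a))
          + f (#s - 1 - #(s.filter (· < a))))) :=
        sum_le_sum fun a ha => sum_orderings_weight_cons_le hk ha ih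
    _ = (#s - 1)! * (#s + k * ∑ j ∈ range #s, f j) := by
        rw [← mul_sum, sum_add_distrib, ← mul_sum, sum_add_distrib, sum_comp_card_filter_lt s f,
          sum_comp_card_filter_lt s fun j => f (#s - 1 - j), sum_range_reflect f #s]
        simp only [sum_const, nsmul_eq_mul, mul_one]
        ring
    _ ≤ (#s - 1)! * (#s : ℝ) ^ k := by gcongr; exact natCast_add_mul_sum_rpow_le hk #s
    _ = (#s)! * (#s : ℝ) ^ (k - 1) := by
        rw [Real.rpow_sub_one hm, ← Nat.mul_factorial_pred hs.card_pos.ne']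
        push_cast
        field_simp

theorem sum_weight_buildBST_le (c : ℝ) (hc : 0 ≤ c) (n : ℕ) :
    ∑ π : Equiv.Perm (Fin n), weight c (buildBST n π)
      ≤ ∑ r ∈ (range n).orderings, weight c (ofList r) := by
  let toList : Equiv.Perm (Fin n) → List ℕ :=
    fun π => (List.finRange n).map fun i => (π i : ℕ)
  have hinj : toList.Injective := fun π σ h => Equiv.ext fun i => Fin.ext <| by
    simpa [toList] using congrArg (·[i]?) h
  have hmem : ∀ π, toList π ∈ (range n).orderings := fun π => by
    refine mem_orderings.mpr
      ⟨(List.nodup_finRange n).map (Fin.val_injective.comp π.injective), ?_⟩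
    ext j
    simp only [toList, List.mem_toFinset, List.mem_map, List.mem_finRange, true_and, mem_range]
    exact ⟨fun ⟨i, hi⟩ => hi ▸ (π i).isLt, fun hj => ⟨π.symm ⟨j, hj⟩, by simp⟩⟩
  calc ∑ π, weight c (buildBST n π) = ∑ r ∈ univ.image toList, weight c (ofList r) := by
        rw [sum_image fun π _ σ _ h => hinj h]
        simp only [buildBST_eq_ofList, toList]
    _ ≤ ∑ r ∈ (range n).orderings, weight c (ofList r) :=
        sum_le_sum_of_subset_of_nonneg (image_subset_iff.mpr fun π _ => hmem π)
          fun _ _ _ => weight_nonneg hc _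

end BTree

theorem card_filter_le_height_sub_one_mul_rpow_le {k x : ℝ} (hk : 2 ≤ k) (hx : 0 ≤ x)
    (n : ℕ) :
    #(univ.filter fun π : Equiv.Perm (Fin n) => x ≤ ((buildBST n π).height : ℝ) - 1)
        * (k / 2) ^ x ≤ n ! * (n : ℝ) ^ (k - 1) := by
  have hc : 1 ≤ k / 2 := by linarith
  calc _ ≤ ∑ π ∈ univ.filter fun π : Equiv.Perm (Fin n) =>
            x ≤ ((buildBST n π).height : ℝ) - 1, BTree.weight (k / 2) (buildBST n π) := by
        rw [← nsmul_eq_mul]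
        exact card_nsmul_le_sum _ _ _ fun π hπ => BTree.rpow_le_weight hc hx (mem_filter.mp hπ).2
    _ ≤ ∑ π, BTree.weight (k / 2) (buildBST n π) :=
        sum_le_sum_of_subset_of_nonneg (subset_univ _) fun _ _ _ =>
          BTree.weight_nonneg (by linarith) _
    _ ≤ ∑ r ∈ (range n).orderings, BTree.weight (k / 2) (BTree.ofList r) :=
        BTree.sum_weight_buildBST_le _ (by linarith) n
    _ ≤ n ! * (n : ℝ) ^ (k - 1) := by simpa using BTree.sum_orderings_weight_le hk (range n)

/-- Devroye's tail bound: the height `H_n` (maximum node depth, in edges) of a BST built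
from a uniformly random permutation of `n` keys satisfies
`ℙ(H_n ≥ k ln n) ≤ (1/n) (2e/k)^(k ln n)` for every real `k > 2`. -/
theorem stmt_17 (n : ℕ) (hn : 1 ≤ n) (k : ℝ) (hk : 2 < k) :
    ((Finset.univ.filter (fun π : Equiv.Perm (Fin n) =>
        k * Real.log n ≤ ((buildBST n π).height : ℝ) - 1)).card : ℝ) / (n.factorial : ℝ)
      ≤ (1 / n) * (2 * Real.exp 1 / k) ^ (k * Real.log n) := by
  have hx : 0 ≤ k * Real.log n := mul_nonneg (by linarith) (Real.log_natCast_nonneg n)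
  have hn0 : (0 : ℝ) < n := by exact_mod_cast hn
  have hnk : (n : ℝ) ^ (k - 1) = Real.exp (k * Real.log n) / n := by
    rw [Real.rpow_sub_one hn0.ne', Real.rpow_def_of_pos hn0, mul_comm]
  have hek : (2 * Real.exp 1 / k) ^ (k * Real.log n)
      = Real.exp (k * Real.log n) / (k / 2) ^ (k * Real.log n) := by
    rw [show 2 * Real.exp 1 / k = Real.exp 1 / (k / 2) by field_simp,
      Real.div_rpow (Real.exp_pos 1).le (by linarith), Real.exp_one_rpow]
  calc _ ≤ (n : ℝ) ^ (k - 1) / (k / 2) ^ (k * Real.log n) := by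
        rw [div_le_div_iff₀ (by positivity) (by positivity)]
        linarith [card_filter_le_height_sub_one_mul_rpow_le hk.le hx n]
    _ = _ := by rw [hnk, hek]; ring
end

section
/- Consider the adversarial arrival order in which at each step the arriving element is, with probability 1/2 each, the smallest or the largest element not yet arrived. For any online ranking algorithm (whose decision at each step depends only on pairwise comparisons among arrived elements), the expected number of inversions between learned ranks and true ranks is Ω(n²); concretely, at each step t ≤ n/2 the expected distance between the learned rank and the true rank of the arriving element is at least n/4, so the expected Spearman footrule cost is at least n²/8. -/
/-- Adversarial lower bound. The adversary flips a fair coin `b t` at each step `t`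
(0-indexed): if `b t = true` the arriving element is the smallest not-yet-arrived one,
otherwise the largest. The true (1-based) rank of the element arriving at step `t` is
then `(# earlier true coins) + 1` if `b t = true`, and `n - (# earlier false coins)`
otherwise. An online algorithm's placement `A t b` may only depend on the comparisons
seen so far, which are determined by the earlier coins — hence the hypothesis `hA`.
The expected footrule cost (uniform over coin sequences) is at least `n²/8`. -/
theorem stmt_18 (n : ℕ) (hn : 2 ≤ n)
    (A : Fin n → (Fin n → Bool) → ℕ)
    (hA : ∀ (t : Fin n) (b b' : Fin n → Bool),
      (∀ t' : Fin n, t' < t → b t' = b' t') → A t b = A t b') :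
    let trueRank : Fin n → (Fin n → Bool) → ℕ := fun t b =>
      if b t then (Finset.univ.filter (fun t' => t' < t ∧ b t' = true)).card + 1
      else n - (Finset.univ.filter (fun t' => t' < t ∧ b t' = false)).card
    (n : ℝ) ^ 2 / 8 ≤ (1 / 2 ^ n) *
      ∑ b : Fin n → Bool, ∑ t : Fin n, |(A t b : ℝ) - (trueRank t b : ℝ)| := by
  intro trueRank
  classical
  set f : Fin n → (Fin n → Bool) → ℝ :=
    fun t b => |(A t b : ℝ) - (trueRank t b : ℝ)| with hf
  set flip : Fin n → (Fin n → Bool) → (Fin n → Bool) :=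
    fun t b => Function.update b t (!b t) with hflipdef
  have hinv : ∀ t : Fin n, Function.Involutive (flip t) := by
    intro t b
    funext x
    by_cases hx : x = t
    · subst hx; simp [hflipdef]
    · simp [hflipdef, Function.update_of_ne hx]
  have hcount : ∀ (t : Fin n) (b : Fin n → Bool),
      (Finset.univ.filter (fun t' => t' < t ∧ b t' = true)).card
      + (Finset.univ.filter (fun t' => t' < t ∧ b t' = false)).card ≤ (t : ℕ) := by
    intro t b
    have hdisj : Disjoint (Finset.univ.filter (fun t' : Fin n => t' < t ∧ b t' = true))
        (Finset.univ.filter (fun t' : Fin n => t' < t ∧ b t' = false)) := by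
      rw [Finset.disjoint_left]
      intro a ha hb
      simp only [Finset.mem_filter] at ha hb
      simp [ha.2.2] at hb
    rw [← Finset.card_union_of_disjoint hdisj]
    calc _ ≤ (Finset.Iio t).card := by
            apply Finset.card_le_card
            intro x hx
            simp only [Finset.mem_union, Finset.mem_filter, Finset.mem_Iio] at hx ⊢
            tauto
      _ = (t : ℕ) := Fin.card_Iio _
  have hfilt : ∀ (t : Fin n) (b : Fin n → Bool) (v : Bool),
      (Finset.univ.filter (fun t' => t' < t ∧ (flip t b) t' = v))
      = (Finset.univ.filter (fun t' => t' < t ∧ b t' = v)) := by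
    intro t b v
    apply Finset.filter_congr
    intro x _
    constructor <;> intro h <;>
      refine ⟨h.1, ?_⟩ <;>
      · have hx : x ≠ t := ne_of_lt h.1
        simpa [hflipdef, Function.update_of_ne hx] using h.2
  have triangle : ∀ (x a e : ℝ), e - a ≤ |x - a| + |x - e| := by
    intro x a e
    have h1 : |a - e| ≤ |a - x| + |x - e| := abs_sub_le a x e
    have h2 : e - a ≤ |a - e| := by rw [abs_sub_comm]; exact le_abs_self _
    have h3 : |a - x| = |x - a| := abs_sub_comm a x
    linarith
  have hkey : ∀ (t : Fin n) (b : Fin n → Bool),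
      (n : ℝ) - 1 - (t : ℕ) ≤ f t b + f t (flip t b) := by
    intro t b
    have hAeq : A t (flip t b) = A t b := by
      apply hA
      intro t' ht'
      have hx : t' ≠ t := ne_of_lt ht'
      simp [hflipdef, Function.update_of_ne hx]
    set c := (Finset.univ.filter (fun t' => t' < t ∧ b t' = true)).card with hc
    set d := (Finset.univ.filter (fun t' => t' < t ∧ b t' = false)).card with hd
    have hcd : c + d ≤ (t : ℕ) := hcount t b
    have htn : (t : ℕ) < n := t.isLt
    have hflipt : (flip t b) t = !b t := by simp [hflipdef]
    have hdn : d ≤ n := by omega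
    have hcast : ((n - d : ℕ) : ℝ) = (n : ℝ) - d := by
      push_cast [Nat.cast_sub hdn]; ring
    have hcr : (c : ℝ) + (d : ℝ) ≤ ((t : ℕ) : ℝ) := by exact_mod_cast hcd
    have htr : ((t : ℕ) : ℝ) ≤ (n : ℝ) - 1 := by
      have : (t : ℕ) + 1 ≤ n := htn
      have := (Nat.cast_le (α := ℝ)).2 this
      push_cast at this
      linarith
    cases hb : b t with
    | true =>
      have h1 : trueRank t b = c + 1 := by simp [trueRank, hb, hc]
      have h2 : trueRank t (flip t b) = n - d := by
        simp [trueRank, hflipt, hb, hfilt, hd]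
      rw [hf]
      simp only [h1, h2, hAeq, hcast]
      have ht3 := triangle (A t b : ℝ) ((c : ℝ) + 1) ((n : ℝ) - d)
      push_cast
      push_cast at ht3
      linarith
    | false =>
      have h1 : trueRank t b = n - d := by simp [trueRank, hb, hd]
      have h2 : trueRank t (flip t b) = c + 1 := by
        simp [trueRank, hflipt, hb, hfilt, hc]
      rw [hf]
      simp only [h1, h2, hAeq, hcast]
      have ht3 := triangle (A t b : ℝ) ((c : ℝ) + 1) ((n : ℝ) - d)
      push_cast
      push_cast at ht3
      linarith
  have hswap : ∀ t : Fin n, ∑ b : Fin n → Bool, f t (flip t b) = ∑ b : Fin n → Bool, f t b :=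
    fun t => Equiv.sum_comp ((hinv t).toPerm) (f t)
  have hT : ∀ t : Fin n,
      (2 : ℝ) ^ n * ((n : ℝ) - 1 - (t : ℕ)) ≤ 2 * ∑ b : Fin n → Bool, f t b := by
    intro t
    have h1 : ∑ _b : Fin n → Bool, ((n : ℝ) - 1 - (t : ℕ))
        ≤ ∑ b : Fin n → Bool, (f t b + f t (flip t b)) :=
      Finset.sum_le_sum fun b _ => hkey t b
    rw [Finset.sum_add_distrib, hswap, Finset.sum_const] at h1
    have hcard : (Finset.univ : Finset (Fin n → Bool)).card = 2 ^ n := by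
      simp [Fintype.card_fun]
    rw [hcard] at h1
    simp only [nsmul_eq_mul] at h1
    push_cast at h1 ⊢
    linarith
  have hm : (∑ i ∈ Finset.range n, (i : ℝ)) * 2 = (n : ℝ) * ((n : ℝ) - 1) := by
    have h0 := Finset.sum_range_id_mul_two n
    have h2 : (((∑ i ∈ Finset.range n, i) * 2 : ℕ) : ℝ) = ((n * (n - 1) : ℕ) : ℝ) := by
      exact_mod_cast congrArg (Nat.cast (R := ℝ)) h0
    push_cast [Nat.cast_sub (show 1 ≤ n by omega)] at h2
    linarith
  have hgauss : ∑ t : Fin n, ((n : ℝ) - 1 - ((t : ℕ) : ℝ)) = (n : ℝ) * ((n : ℝ) - 1) / 2 := by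
    rw [Fin.sum_univ_eq_sum_range (fun i => (n : ℝ) - 1 - (i : ℝ))]
    rw [Finset.sum_sub_distrib, Finset.sum_sub_distrib, Finset.sum_const, Finset.sum_const,
      Finset.card_range]
    simp only [nsmul_eq_mul]
    push_cast
    linarith
  have hS : (2 : ℝ) ^ n * ((n : ℝ) * ((n : ℝ) - 1) / 2)
      ≤ 2 * ∑ t : Fin n, ∑ b : Fin n → Bool, f t b := by
    calc (2 : ℝ) ^ n * ((n : ℝ) * ((n : ℝ) - 1) / 2)
        = ∑ t : Fin n, (2 : ℝ) ^ n * ((n : ℝ) - 1 - ((t : ℕ) : ℝ)) := by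
          rw [← Finset.mul_sum, hgauss]
      _ ≤ ∑ t : Fin n, 2 * ∑ b : Fin n → Bool, f t b :=
          Finset.sum_le_sum fun t _ => hT t
      _ = 2 * ∑ t : Fin n, ∑ b : Fin n → Bool, f t b := by rw [Finset.mul_sum]
  rw [Finset.sum_comm]
  have hp : (0 : ℝ) < 2 ^ n := by positivity
  have hn' : (2 : ℝ) ≤ (n : ℝ) := by exact_mod_cast hn
  rw [one_div, inv_mul_eq_div, le_div_iff₀ hp]
  nlinarith [hS, mul_nonneg hp.le (mul_nonneg (by positivity : (0:ℝ) ≤ (n:ℝ)) (by linarith : (0:ℝ) ≤ (n:ℝ) - 2))]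
end
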